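/- arXiv:2107.00681 — 6 statements merged into one kernel-verified Lean document; each statement's English description precedes it below -/
import Mathlib

section
/- Let P be a probability measure on ℝ² (with coordinates (x, y)) such that X and Y are square-integrable, and let (x̃, ỹ) ∈ ℝ². For t ∈ [0,1] let P_t = t·δ_{(x̃,ỹ)} + (1−t)·P and let c(t) = E_{P_t}(XY) − E_{P_t}(X)·E_{P_t}(Y) be the covariance under P_t. Then c is differentiable at t = 0 with c'(0) = (ỹ − E_P(Y))(x̃ − E_P(X)) − c(0). In particular, the covariance Ψ(P) = Cov_P(X,Y) has efficient influence function (Y − E_P(Y))(X − E_P(X)) − Ψ(P). -/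
open MeasureTheory Set

/-
Integrating against `P_t = t • δ_a + (1 - t) • P` is affine in `t`, so the three moments
`E XY`, `E X`, `E Y` under `P_t` are line maps in `t`, and the covariance along the
submodel is a quadratic polynomial in `t` on `[0, 1]`; its derivative at `0` follows from the
product rule.
-/

open AffineMap in
theorem integral_dirac_mixture {α E : Type*} [MeasurableSpace α] [MeasurableSingletonClass α]
    [NormedAddCommGroup E] [NormedSpace ℝ E] [CompleteSpace E] (P : Measure α) {f : α → E}
    (hf : Integrable f P) (a : α) {t : ℝ} (ht : t ∈ Icc (0 : ℝ) 1) :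
    ∫ p, f p ∂(ENNReal.ofReal t • Measure.dirac a + ENNReal.ofReal (1 - t) • P)
      = lineMap (∫ p, f p ∂P) (f a) t := by
  have hdirac : Integrable f (ENNReal.ofReal t • Measure.dirac a) :=
    (integrable_dirac enorm_lt_top).smul_measure ENNReal.ofReal_ne_top
  rw [integral_add_measure hdirac (hf.smul_measure ENNReal.ofReal_ne_top),
    integral_smul_measure, integral_smul_measure, integral_dirac,
    ENNReal.toReal_ofReal ht.1, ENNReal.toReal_ofReal (sub_nonneg.2 ht.2),
    lineMap_apply_module, add_comm]

open AffineMap in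
/-- For a probability measure `P` on `ℝ²` with square-integrable coordinates
`X` (first) and `Y` (second), the covariance along the mixture submodel
`P_t = t·δ_{(x̃,ỹ)} + (1−t)·P` is differentiable at `t = 0` with derivative
`(ỹ − E_P Y)(x̃ − E_P X) − Cov_P(X,Y)`, exhibiting `(Y − E_P Y)(X − E_P X) − Ψ(P)` as the
efficient influence function of the covariance. -/
theorem stmt_3 (P : Measure (ℝ × ℝ)) [IsProbabilityMeasure P]
    (hX : MemLp (fun p : ℝ × ℝ => p.1) 2 P)
    (hY : MemLp (fun p : ℝ × ℝ => p.2) 2 P)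
    (xtil ytil : ℝ) :
    let Pt : ℝ → Measure (ℝ × ℝ) := fun t =>
      ENNReal.ofReal t • Measure.dirac (xtil, ytil) + ENNReal.ofReal (1 - t) • P
    let c : ℝ → ℝ := fun t =>
      (∫ p, p.1 * p.2 ∂(Pt t)) - (∫ p, p.1 ∂(Pt t)) * (∫ p, p.2 ∂(Pt t))
    HasDerivWithinAt c
      ((ytil - ∫ p, p.2 ∂P) * (xtil - ∫ p, p.1 ∂P) - c 0) (Icc 0 1) 0 := by
  intro Pt c
  have hXY : Integrable (fun p : ℝ × ℝ => p.1 * p.2) P := hX.integrable_mul hY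
  set A := ∫ p, p.1 ∂P
  set B := ∫ p, p.2 ∂P
  set M := ∫ p, p.1 * p.2 ∂P
  have hc : EqOn c
      (fun t => lineMap M (xtil * ytil) t - lineMap A xtil t * lineMap B ytil t) (Icc 0 1) :=
    fun t ht => by
      simp only [c, Pt, integral_dirac_mixture P hXY _ ht,
        integral_dirac_mixture P (hX.integrable one_le_two) _ ht,
        integral_dirac_mixture P (hY.integrable one_le_two) _ ht]
      rfl
  have hc0 : c 0 = M - A * B := by simpa using hc ⟨le_rfl, zero_le_one⟩
  have hderiv := (hasDerivAt_lineMap (a := M) (b := xtil * ytil) (x := (0 : ℝ))).sub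
    ((hasDerivAt_lineMap (a := A) (b := xtil)).mul (hasDerivAt_lineMap (a := B) (b := ytil)))
  refine (hderiv.hasDerivWithinAt.congr hc (hc ⟨le_rfl, zero_le_one⟩)).congr_deriv ?_
  simp only [lineMap_apply_zero, hc0]
  ring
end

section
/- Let (𝒵, 𝒜, ν) be a σ-finite measure space, μ a σ-finite measure on ℝ, and let P and P̃ be probability measures on ℝ × {0,1} × 𝒵 with densities f and f̃ with respect to μ ⊗ (counting measure) ⊗ ν. Assume: (i) there is M < ∞ with |y| ≤ M a.e. on {f > 0}; (ii) f̃ ≤ C·f a.e. for some constant C; (iii) writing f(z) = Σ_{x∈{0,1}} ∫ f(y,x,z) dμ(y) and f(1,z) = ∫ f(y,1,z) dμ(y), the propensity score π(z) = f(1,z)/f(z) satisfies π(z) ≥ ε > 0 for ν-a.e. z with f(z) > 0. For t ∈ [0,1) set f_t = (1−t)f + t·f̃, m_t(z) = ∫ y f_t(y,1,z) dμ(y) / f_t(1,z), and Ψ(t) = ∫ m_t(z) f_t(z) dν(z). Then t ↦ Ψ(t) has a right derivative at t = 0 equal to ∫ [ 1{x=1}/π(z) · ( y − m_0(z) ) +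 m_0(z) − Ψ(0) ] dP̃(y,x,z). That is, the potential outcome mean Ψ(P) = E_P{E_P(Y | X=1, Z)} is pathwise differentiable with efficient influence function 1{X=1}/π(Z)·(Y − m(Z)) + m(Z) − Ψ(P), where m(z) = E_P(Y | X=1, Z=z). -/
open MeasureTheory Set

section helpers
variable {Z : Type*} [MeasurableSpace Z] {ν : Measure Z} [SigmaFinite ν]
  {μ : Measure ℝ} [SigmaFinite μ]

lemma count_bool : (Measure.count : Measure Bool) = Measure.dirac true + Measure.dirac false := by
  rw [Measure.count, Measure.sum_fintype, Fintype.sum_bool]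

lemma count_prod_eq : ((Measure.count : Measure Bool).prod ν)
    = ν.map (Prod.mk true) + ν.map (Prod.mk false) := by
  rw [count_bool, Measure.add_prod, Measure.dirac_prod, Measure.dirac_prod]

lemma ae_bool_prod {Q : Bool × Z → Prop}
    (h : ∀ᵐ w ∂((Measure.count : Measure Bool).prod ν), Q w) (x : Bool) :
    ∀ᵐ z ∂ν, Q (x, z) := by
  rw [count_prod_eq, ae_add_measure_iff] at h
  cases x
  · exact ae_of_ae_map measurable_prodMk_left.aemeasurable h.2
  · exact ae_of_ae_map measurable_prodMk_left.aemeasurable h.1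

lemma integrable_bool_prod {H : Bool × Z → ℝ}
    (hH : Integrable H ((Measure.count : Measure Bool).prod ν)) (x : Bool) :
    Integrable (fun z => H (x, z)) ν := by
  rw [count_prod_eq, integrable_add_measure] at hH
  cases x
  · exact (integrable_map_measure hH.2.aestronglyMeasurable
      measurable_prodMk_left.aemeasurable).mp hH.2
  · exact (integrable_map_measure hH.1.aestronglyMeasurable
      measurable_prodMk_left.aemeasurable).mp hH.1

lemma integral_bool_prod {H : Bool × Z → ℝ}
    (hH : Integrable H ((Measure.count : Measure Bool).prod ν)) :
    ∫ w, H w ∂((Measure.count : Measure Bool).prod ν)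
      = ∫ z, H (true, z) ∂ν + ∫ z, H (false, z) ∂ν := by
  have h2 := hH
  rw [count_prod_eq, integrable_add_measure] at h2
  rw [count_prod_eq, integral_add_measure h2.1 h2.2,
    integral_map measurable_prodMk_left.aemeasurable h2.1.aestronglyMeasurable,
    integral_map measurable_prodMk_left.aemeasurable h2.2.aestronglyMeasurable]

lemma ae_slice {P : ℝ × Bool × Z → Prop}
    (h : ∀ᵐ p ∂(μ.prod ((Measure.count : Measure Bool).prod ν)), P p) (x : Bool) :
    ∀ᵐ z ∂ν, ∀ᵐ y ∂μ, P (y, x, z) := by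
  have h2 : ∀ᵐ q ∂(((Measure.count : Measure Bool).prod ν).prod μ), P q.swap :=
    (Measure.measurePreserving_swap.quasiMeasurePreserving.tendsto_ae).eventually h
  have h3 := Measure.ae_ae_of_ae_prod h2
  exact ae_bool_prod h3 x

lemma slice_int {G : ℝ × Bool × Z → ℝ}
    (hG : Integrable G (μ.prod ((Measure.count : Measure Bool).prod ν))) (x : Bool) :
    ∀ᵐ z ∂ν, Integrable (fun y => G (y, x, z)) μ := by
  have h2 := hG.swap.prod_right_ae
  exact ae_bool_prod h2 x

lemma int_int {G : ℝ × Bool × Z → ℝ}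
    (hG : Integrable G (μ.prod ((Measure.count : Measure Bool).prod ν))) (x : Bool) :
    Integrable (fun z => ∫ y, G (y, x, z) ∂μ) ν :=
  integrable_bool_prod (hG.swap.integral_prod_left) x

lemma fubini_int {G : ℝ × Bool × Z → ℝ}
    (hG : Integrable G (μ.prod ((Measure.count : Measure Bool).prod ν))) :
    ∫ p, G p ∂(μ.prod ((Measure.count : Measure Bool).prod ν))
      = (∫ z, ∫ y, G (y, true, z) ∂μ ∂ν) + ∫ z, ∫ y, G (y, false, z) ∂μ ∂ν := by
  rw [← integral_prod_swap G]
  rw [integral_prod (fun q => G q.swap) hG.swap]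
  exact integral_bool_prod (hG.swap.integral_prod_left)

lemma my_int_eq_one {α : Type*} [MeasurableSpace α] {m : Measure α} {g : α → ℝ}
    (h1 : ∫ x, g x ∂m = 1) : Integrable g m := by
  by_contra h
  rw [integral_undef h] at h1
  norm_num at h1

end helpers

lemma abs_sub_le' (x y : ℝ) : |x - y| ≤ |x| + |y| := by
  rw [sub_eq_add_neg]
  exact (abs_add_le _ _).trans (by rw [abs_neg])

lemma affine_hasDeriv (a a' t : ℝ) : HasDerivAt (fun s : ℝ => a + s*(a'-a)) (a'-a) t := by
  simpa using ((hasDerivAt_id t).mul_const (a'-a)).const_add a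

lemma Bpos (b b' C t : ℝ) (hC : 0 < C) (hbpos : 0 < b) (hb' : 0 ≤ b') (hb'C : b' ≤ C*b)
    (ht : |t| ≤ 1/(2*(C+1))) : b/2 ≤ b + t*(b'-b) ∧ b + t*(b'-b) ≤ 2*b := by
  have h1 : |b' - b| ≤ (C+1)*b := abs_le.mpr ⟨by nlinarith, by nlinarith⟩
  have h2 : |t*(b'-b)| ≤ b/2 := by
    rw [abs_mul]
    calc |t| * |b'-b| ≤ (1/(2*(C+1)))*((C+1)*b) :=
          mul_le_mul ht h1 (abs_nonneg _) (by positivity)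
    _ = b/2 := by field_simp
  have h3 := abs_le.mp h2
  constructor <;> nlinarith [h3.1, h3.2]

lemma deriv_core (a b c a' b' c' t : ℝ) (hb : b + t*(b'-b) ≠ 0) :
    HasDerivAt (fun s => ((a + s*(a'-a))/(b + s*(b'-b)))*(c + s*(c'-c)))
      ((((a'-a)*(b + t*(b'-b)) - (a + t*(a'-a))*(b'-b))/(b + t*(b'-b))^2)*(c + t*(c'-c))
        + ((a + t*(a'-a))/(b + t*(b'-b)))*(c'-c)) t :=
  ((affine_hasDeriv a a' t).div (affine_hasDeriv b b' t) hb).mul (affine_hasDeriv c c' t)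

set_option maxHeartbeats 1000000 in
lemma Fbound (M C a b c a' b' c' t : ℝ) (hC : 0 < C)
    (hbpos : 0 < b) (hbc : b ≤ c)
    (hb' : 0 ≤ b') (hb'C : b' ≤ C*b) (hc' : 0 ≤ c') (hc'C : c' ≤ C*c)
    (ha : |a| ≤ |M| *b) (ha' : |a'| ≤ |M| *C*b) (ht : |t| ≤ 1/(2*(C+1))) :
    |(((a'-a)*(b + t*(b'-b)) - (a + t*(a'-a))*(b'-b))/(b + t*(b'-b))^2)*(c + t*(c'-c))
      + ((a + t*(a'-a))/(b + t*(b'-b)))*(c'-c)| ≤ 36*(|M|+1)*(C+1)^2 * c := by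
  obtain ⟨hB1, hB2⟩ := Bpos b b' C t hC hbpos hb' hb'C ht
  have hBpos : 0 < b + t*(b'-b) := lt_of_lt_of_le (by positivity) hB1
  have hc0 : 0 < c := lt_of_lt_of_le hbpos hbc
  have hM0 : (0:ℝ) ≤ |M| := abs_nonneg M
  have ht2 : |t| ≤ 1 := le_trans ht (by rw [div_le_one (by positivity)]; nlinarith)
  have hP : |a' - a| ≤ |M| *(C+1)*b := by
    calc |a'-a| ≤ |a'| + |a| := abs_sub_le' _ _
    _ ≤ |M| *C*b + |M| *b := add_le_add ha' ha
    _ = |M| *(C+1)*b := by ring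
  have hA : |a + t*(a'-a)| ≤ 2*(|M| *(C+1)*b) := by
    calc |a + t*(a'-a)| ≤ |a| + |t| * |a'-a| := by
          rw [← abs_mul]; exact abs_add_le _ _
    _ ≤ |M| *b + 1*(|M| *(C+1)*b) :=
          add_le_add ha (mul_le_mul ht2 hP (abs_nonneg _) zero_le_one)
    _ ≤ _ := by nlinarith
  have hbb : |b' - b| ≤ (C+1)*b := abs_le.mpr ⟨by nlinarith, by nlinarith⟩
  have hcc : |c' - c| ≤ (C+1)*c := abs_le.mpr ⟨by nlinarith, by nlinarith⟩
  have hCt : |c + t*(c'-c)| ≤ 2*c := by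
    have h5 : |t| * |c'-c| ≤ c/2 := by
      calc |t| * |c'-c| ≤ (1/(2*(C+1)))*((C+1)*c) :=
            mul_le_mul ht hcc (abs_nonneg _) (by positivity)
      _ = c/2 := by field_simp
    calc |c + t*(c'-c)| ≤ |c| + |t| * |c'-c| := by rw [← abs_mul]; exact abs_add_le _ _
    _ ≤ c + c/2 := by rw [abs_of_pos hc0]; linarith
    _ ≤ 2*c := by linarith
  have hNum : |(a'-a)*(b + t*(b'-b)) - (a + t*(a'-a))*(b'-b)|
      ≤ 4*(C+1)*(|M| *(C+1)*b)*b := by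
    calc |(a'-a)*(b + t*(b'-b)) - (a + t*(a'-a))*(b'-b)|
        ≤ |a'-a| * |b + t*(b'-b)| + |a + t*(a'-a)| * |b'-b| := by
          rw [← abs_mul, ← abs_mul]; exact abs_sub_le' _ _
    _ ≤ (|M| *(C+1)*b)*(2*b) + (2*(|M| *(C+1)*b))*((C+1)*b) := by
          apply add_le_add
          · exact mul_le_mul hP (by rw [abs_of_pos hBpos]; exact hB2) (abs_nonneg _)
              (by positivity)
          · exact mul_le_mul hA hbb (abs_nonneg _) (by positivity)
    _ ≤ 4*(C+1)*(|M| *(C+1)*b)*b := by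
          nlinarith [mul_nonneg (mul_nonneg (mul_nonneg hM0
            (by linarith : (0:ℝ) ≤ C+1)) hC.le) (sq_nonneg b)]
  have hB2sq : b^2/4 ≤ (b + t*(b'-b))^2 := by nlinarith
  have hT1 : |(((a'-a)*(b + t*(b'-b)) - (a + t*(a'-a))*(b'-b))/(b + t*(b'-b))^2)
      *(c + t*(c'-c))| ≤ 32*|M| *(C+1)^2*c := by
    rw [abs_mul, abs_div, abs_of_pos (pow_pos hBpos 2), div_mul_eq_mul_div,
      div_le_iff₀ (pow_pos hBpos 2)]
    calc |(a'-a)*(b + t*(b'-b)) - (a + t*(a'-a))*(b'-b)| * |c + t*(c'-c)|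
        ≤ (4*(C+1)*(|M| *(C+1)*b)*b) * (2*c) :=
          mul_le_mul hNum hCt (abs_nonneg _) (by positivity)
    _ = 32*|M| *(C+1)^2*c * (b^2/4) := by ring
    _ ≤ 32*|M| *(C+1)^2*c * (b + t*(b'-b))^2 :=
          mul_le_mul_of_nonneg_left hB2sq (by positivity)
  have hT2 : |((a + t*(a'-a))/(b + t*(b'-b)))*(c'-c)| ≤ 4*|M| *(C+1)^2*c := by
    rw [abs_mul, abs_div, abs_of_pos hBpos, div_mul_eq_mul_div, div_le_iff₀ hBpos]
    calc |a + t*(a'-a)| * |c'-c| ≤ (2*(|M| *(C+1)*b))*((C+1)*c) :=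
          mul_le_mul hA hcc (abs_nonneg _) (by positivity)
    _ = 4*|M| *(C+1)^2*c * (b/2) := by ring
    _ ≤ 4*|M| *(C+1)^2*c * (b + t*(b'-b)) :=
          mul_le_mul_of_nonneg_left hB1 (by positivity)
  refine (abs_add_le _ _).trans ?_
  refine (add_le_add hT1 hT2).trans ?_
  nlinarith [mul_nonneg (by positivity : (0:ℝ) ≤ (C+1)^2) hc0.le]

variable {μ : Measure ℝ} [SigmaFinite μ]

lemma slice_facts (M C : ℝ) (hC : 0 < C) {g1 g0 h1 h0 : ℝ → ℝ}
    (hg1n : ∀ y, 0 ≤ g1 y) (hg0n : ∀ y, 0 ≤ g0 y) (hh1n : ∀ y, 0 ≤ h1 y) (hh0n : ∀ y, 0 ≤ h0 y)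
    (ig1 : Integrable g1 μ) (ig0 : Integrable g0 μ) (ih1 : Integrable h1 μ) (ih0 : Integrable h0 μ)
    (iyg1 : Integrable (fun y => y * g1 y) μ) (iyh1 : Integrable (fun y => y * h1 y) μ)
    (hbd1 : ∀ᵐ y ∂μ, 0 < g1 y → |y| ≤ M)
    (hdm1 : ∀ᵐ y ∂μ, h1 y ≤ C * g1 y) (hdm0 : ∀ᵐ y ∂μ, h0 y ≤ C * g0 y) :
    ((∫ y, (g1 y + g0 y) ∂μ) = (∫ y, g1 y ∂μ) + ∫ y, g0 y ∂μ)
    ∧ ((∫ y, (h1 y + h0 y) ∂μ) = (∫ y, h1 y ∂μ) + ∫ y, h0 y ∂μ)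
    ∧ (0 ≤ ∫ y, g1 y ∂μ) ∧ (0 ≤ ∫ y, g0 y ∂μ) ∧ (0 ≤ ∫ y, h1 y ∂μ) ∧ (0 ≤ ∫ y, h0 y ∂μ)
    ∧ ((∫ y, h1 y ∂μ) ≤ C * ∫ y, g1 y ∂μ) ∧ ((∫ y, h0 y ∂μ) ≤ C * ∫ y, g0 y ∂μ)
    ∧ (|∫ y, y * g1 y ∂μ| ≤ |M| * ∫ y, g1 y ∂μ)
    ∧ (|∫ y, y * h1 y ∂μ| ≤ |M| * ∫ y, h1 y ∂μ)
    ∧ ((∫ y, (g1 y + g0 y) ∂μ) = 0 →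
        ((∫ y, g1 y ∂μ) = 0 ∧ (∫ y, y * g1 y ∂μ) = 0 ∧ (∫ y, h1 y ∂μ) = 0
          ∧ (∫ y, y * h1 y ∂μ) = 0 ∧ (∫ y, h0 y ∂μ) = 0 ∧ (∫ y, (h1 y + h0 y) ∂μ) = 0))
    ∧ (∀ t : ℝ, (∫ y, y * ((1-t) * g1 y + t * h1 y) ∂μ)
        = (∫ y, y * g1 y ∂μ) + t * ((∫ y, y * h1 y ∂μ) - ∫ y, y * g1 y ∂μ))
    ∧ (∀ t : ℝ, (∫ y, ((1-t) * g1 y + t * h1 y) ∂μ)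
        = (∫ y, g1 y ∂μ) + t * ((∫ y, h1 y ∂μ) - ∫ y, g1 y ∂μ))
    ∧ (∀ t : ℝ, (∫ y, (((1-t) * g1 y + t * h1 y) + ((1-t) * g0 y + t * h0 y)) ∂μ)
        = (∫ y, (g1 y + g0 y) ∂μ) + t * ((∫ y, (h1 y + h0 y) ∂μ) - ∫ y, (g1 y + g0 y) ∂μ))
    ∧ (∀ u v w : ℝ, (∫ y, ((u * (y - v) + w) * h1 y + w * h0 y) ∂μ)
        = u * (∫ y, y * h1 y ∂μ) + (w - u * v) * (∫ y, h1 y ∂μ) + w * ∫ y, h0 y ∂μ) := by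
  have hbd1' : ∀ᵐ y ∂μ, 0 < h1 y → |y| ≤ M := by
    filter_upwards [hbd1, hdm1] with y hy hd hpos
    have : 0 < g1 y := by
      rcases (hg1n y).eq_or_lt with h | h
      · exfalso; rw [← h] at hd; simp at hd; linarith
      · exact h
    exact hy this
  have habs : ∀ (k : ℝ → ℝ), (∀ y, 0 ≤ k y) → Integrable k μ →
      Integrable (fun y => y * k y) μ → (∀ᵐ y ∂μ, 0 < k y → |y| ≤ M) →
      |∫ y, y * k y ∂μ| ≤ |M| * ∫ y, k y ∂μ := by
    intro k hkn ik iyk hbd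
    have h1 : ‖∫ y, y * k y ∂μ‖ ≤ ∫ y, ‖y * k y‖ ∂μ :=
      norm_integral_le_integral_norm _
    have h2 : (∫ y, ‖y * k y‖ ∂μ) ≤ ∫ y, |M| * k y ∂μ := by
      refine integral_mono_ae iyk.norm (ik.const_mul _) ?_
      filter_upwards [hbd] with y hy
      rw [Real.norm_eq_abs]
      rcases (hkn y).eq_or_lt with h | h
      · rw [← h]; simp
      · rw [abs_mul, abs_of_pos h]
        exact mul_le_mul_of_nonneg_right ((hy h).trans (le_abs_self M)) h.le
    calc |∫ y, y * k y ∂μ| = ‖∫ y, y * k y ∂μ‖ := (Real.norm_eq_abs _).symm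
    _ ≤ ∫ y, ‖y * k y‖ ∂μ := h1
    _ ≤ ∫ y, |M| * k y ∂μ := h2
    _ = |M| * ∫ y, k y ∂μ := integral_const_mul _ _
  refine ⟨integral_add ig1 ig0, integral_add ih1 ih0,
    integral_nonneg hg1n, integral_nonneg hg0n, integral_nonneg hh1n, integral_nonneg hh0n,
    ?_, ?_, habs g1 hg1n ig1 iyg1 hbd1, habs h1 hh1n ih1 iyh1 hbd1', ?_, ?_, ?_, ?_, ?_⟩
  · calc (∫ y, h1 y ∂μ) ≤ ∫ y, C * g1 y ∂μ := integral_mono_ae ih1 (ig1.const_mul C) hdm1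
    _ = C * ∫ y, g1 y ∂μ := integral_const_mul _ _
  · calc (∫ y, h0 y ∂μ) ≤ ∫ y, C * g0 y ∂μ := integral_mono_ae ih0 (ig0.const_mul C) hdm0
    _ = C * ∫ y, g0 y ∂μ := integral_const_mul _ _
  · -- zero case
    intro hz
    have hae : (fun y => g1 y + g0 y) =ᵐ[μ] 0 :=
      (integral_eq_zero_iff_of_nonneg_ae
        (Filter.Eventually.of_forall fun y => by simpa using add_nonneg (hg1n y) (hg0n y))
        (ig1.add ig0)).mp hz
    have hg1z : g1 =ᵐ[μ] 0 := by
      filter_upwards [hae] with y hy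
      simp only [Pi.zero_apply] at hy ⊢
      have := hg1n y; have := hg0n y; linarith
    have hg0z : g0 =ᵐ[μ] 0 := by
      filter_upwards [hae] with y hy
      simp only [Pi.zero_apply] at hy ⊢
      have := hg1n y; have := hg0n y; linarith
    have hh1z : h1 =ᵐ[μ] 0 := by
      filter_upwards [hg1z, hdm1] with y hy hd
      simp only [Pi.zero_apply] at hy ⊢
      have := hh1n y
      rw [hy] at hd; simp at hd; linarith
    have hh0z : h0 =ᵐ[μ] 0 := by
      filter_upwards [hg0z, hdm0] with y hy hd
      simp only [Pi.zero_apply] at hy ⊢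
      have := hh0n y
      rw [hy] at hd; simp at hd; linarith
    refine ⟨integral_eq_zero_of_ae hg1z, ?_, integral_eq_zero_of_ae hh1z, ?_,
      integral_eq_zero_of_ae hh0z, ?_⟩
    · refine integral_eq_zero_of_ae ?_
      filter_upwards [hg1z] with y hy
      simp only [Pi.zero_apply] at hy ⊢
      rw [hy, mul_zero]
    · refine integral_eq_zero_of_ae ?_
      filter_upwards [hh1z] with y hy
      simp only [Pi.zero_apply] at hy ⊢
      rw [hy, mul_zero]
    · refine integral_eq_zero_of_ae ?_
      filter_upwards [hh1z, hh0z] with y hy hy'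
      simp only [Pi.zero_apply] at hy hy' ⊢
      rw [hy, hy', add_zero]
  · -- affine in t : y-weighted
    intro t
    rw [integral_congr_ae (Filter.Eventually.of_forall (fun y =>
      show y * ((1-t) * g1 y + t * h1 y)
        = (1-t) * (y * g1 y) + t * (y * h1 y) by ring))]
    rw [integral_add (iyg1.const_mul _) (iyh1.const_mul _), integral_const_mul,
      integral_const_mul]
    ring
  · intro t
    rw [integral_add (ig1.const_mul _) (ih1.const_mul _), integral_const_mul,
      integral_const_mul]
    ring
  · intro t
    rw [integral_congr_ae (Filter.Eventually.of_forall (fun y =>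
      show ((1-t) * g1 y + t * h1 y) + ((1-t) * g0 y + t * h0 y)
        = (1-t) * (g1 y + g0 y) + t * (h1 y + h0 y) by ring))]
    have i10 : Integrable (fun y => g1 y + g0 y) μ := ig1.add ig0
    have j10 : Integrable (fun y => h1 y + h0 y) μ := ih1.add ih0
    rw [integral_add (i10.const_mul _) (j10.const_mul _),
      integral_const_mul, integral_const_mul]
    ring
  · intro u v w
    rw [integral_congr_ae (Filter.Eventually.of_forall (fun y =>
      show (u * (y - v) + w) * h1 y + w * h0 y
        = u * (y * h1 y) + ((w - u * v) * h1 y + w * h0 y) by ring))]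
    have j1 : Integrable (fun y => (w - u * v) * h1 y + w * h0 y) μ :=
      (ih1.const_mul _).add (ih0.const_mul _)
    rw [integral_add (iyh1.const_mul _) j1,
      integral_add (ih1.const_mul _) (ih0.const_mul _), integral_const_mul,
      integral_const_mul, integral_const_mul]
    ring

lemma slice_facts2 (μ : Measure ℝ) [SigmaFinite μ] (M C : ℝ) (hC : 0 < C)
    {Z : Type*} (f ftil : ℝ → Bool → Z → ℝ) (z : Z)
    (hg1n : ∀ y, 0 ≤ f y true z) (hg0n : ∀ y, 0 ≤ f y false z)
    (hh1n : ∀ y, 0 ≤ ftil y true z) (hh0n : ∀ y, 0 ≤ ftil y false z)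
    (ig1 : Integrable (fun y => f y true z) μ) (ig0 : Integrable (fun y => f y false z) μ)
    (ih1 : Integrable (fun y => ftil y true z) μ) (ih0 : Integrable (fun y => ftil y false z) μ)
    (iyg1 : Integrable (fun y => y * f y true z) μ)
    (iyh1 : Integrable (fun y => y * ftil y true z) μ)
    (hbd1 : ∀ᵐ y ∂μ, 0 < f y true z → |y| ≤ M)
    (hdm1 : ∀ᵐ y ∂μ, ftil y true z ≤ C * f y true z)
    (hdm0 : ∀ᵐ y ∂μ, ftil y false z ≤ C * f y false z) :
    ((∫ y, (f y true z + f y false z) ∂μ) = (∫ y, f y true z ∂μ) + (∫ y, f y false z ∂μ))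
    ∧ ((∫ y, (ftil y true z + ftil y false z) ∂μ) = (∫ y, ftil y true z ∂μ) + (∫ y, ftil y false z ∂μ))
    ∧ (0 ≤ (∫ y, f y true z ∂μ)) ∧ (0 ≤ (∫ y, f y false z ∂μ)) ∧ (0 ≤ (∫ y, ftil y true z ∂μ)) ∧ (0 ≤ (∫ y, ftil y false z ∂μ))
    ∧ ((∫ y, ftil y true z ∂μ) ≤ C * (∫ y, f y true z ∂μ)) ∧ ((∫ y, ftil y false z ∂μ) ≤ C * (∫ y, f y false z ∂μ))
    ∧ (|(∫ y, y * f y true z ∂μ)| ≤ |M| * (∫ y, f y true z ∂μ))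
    ∧ (|(∫ y, y * ftil y true z ∂μ)| ≤ |M| * (∫ y, ftil y true z ∂μ))
    ∧ ((∫ y, (f y true z + f y false z) ∂μ) = 0 →
        ((∫ y, f y true z ∂μ) = 0 ∧ (∫ y, y * f y true z ∂μ) = 0 ∧ (∫ y, ftil y true z ∂μ) = 0 ∧ (∫ y, y * ftil y true z ∂μ) = 0 ∧ (∫ y, ftil y false z ∂μ) = 0 ∧ (∫ y, (ftil y true z + ftil y false z) ∂μ) = 0))
    ∧ (∀ t : ℝ, (∫ y, y * ((1 - t) * f y true z + t * ftil y true z) ∂μ)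
        = (∫ y, y * f y true z ∂μ) + t * ((∫ y, y * ftil y true z ∂μ) - (∫ y, y * f y true z ∂μ)))
    ∧ (∀ t : ℝ, (∫ y, ((1 - t) * f y true z + t * ftil y true z) ∂μ)
        = (∫ y, f y true z ∂μ) + t * ((∫ y, ftil y true z ∂μ) - (∫ y, f y true z ∂μ)))
    ∧ (∀ t : ℝ, (∫ y, (((1 - t) * f y true z + t * ftil y true z)
          + ((1 - t) * f y false z + t * ftil y false z)) ∂μ)
        = (∫ y, (f y true z + f y false z) ∂μ) + t * ((∫ y, (ftil y true z + ftil y false z) ∂μ) - (∫ y, (f y true z + f y false z) ∂μ)))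
    ∧ (∀ u v w : ℝ, (∫ y, ((u * (y - v) + w) * ftil y true z + w * ftil y false z) ∂μ)
        = u * (∫ y, y * ftil y true z ∂μ) + (w - u * v) * (∫ y, ftil y true z ∂μ) + w * (∫ y, ftil y false z ∂μ)) :=
  slice_facts M C hC hg1n hg0n hh1n hh0n ig1 ig0 ih1 ih0 iyg1 iyh1 hbd1 hdm1 hdm0

set_option maxHeartbeats 4000000 in
/-- Pathwise differentiability of the potential outcome mean
`Ψ(P) = E_P{E_P(Y | X=1, Z)}`, with binary exposure encoded as `Bool` (`true ↔ X = 1`).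
`P` and `P̃` have densities `f`, `f̃` w.r.t. `μ ⊗ count ⊗ ν`; under boundedness of `Y` on
the support of `f`, domination `f̃ ≤ C·f`, and positivity of the propensity score, the map
`t ↦ Ψ(P_t)` for the mixture submodel `f_t = (1−t)f + t·f̃` has right derivative at `0`
equal to `∫ [1{x=1}/π(z)·(y − m(z)) + m(z) − Ψ(0)] dP̃`. -/
theorem stmt_4 {Z : Type*} [MeasurableSpace Z] (ν : Measure Z) [SigmaFinite ν]
    (μ : Measure ℝ) [SigmaFinite μ]
    (f ftil : ℝ → Bool → Z → ℝ)
    (hf_meas : Measurable fun p : ℝ × Bool × Z => f p.1 p.2.1 p.2.2)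
    (hft_meas : Measurable fun p : ℝ × Bool × Z => ftil p.1 p.2.1 p.2.2)
    (hf_nn : ∀ y x z, 0 ≤ f y x z) (hft_nn : ∀ y x z, 0 ≤ ftil y x z)
    (hf_one : ∫ p, f p.1 p.2.1 p.2.2
      ∂(μ.prod ((Measure.count : Measure Bool).prod ν)) = 1)
    (hft_one : ∫ p, ftil p.1 p.2.1 p.2.2
      ∂(μ.prod ((Measure.count : Measure Bool).prod ν)) = 1)
    (M C ε : ℝ) (hε : 0 < ε)
    (hbdd : ∀ᵐ p ∂(μ.prod ((Measure.count : Measure Bool).prod ν)),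
      0 < f p.1 p.2.1 p.2.2 → |p.1| ≤ M)
    (hdom : ∀ᵐ p ∂(μ.prod ((Measure.count : Measure Bool).prod ν)),
      ftil p.1 p.2.1 p.2.2 ≤ C * f p.1 p.2.1 p.2.2)
    (hpos : ∀ᵐ z ∂ν, 0 < ∫ y, (f y true z + f y false z) ∂μ →
      ε ≤ (∫ y, f y true z ∂μ) / ∫ y, (f y true z + f y false z) ∂μ) :
    let ft : ℝ → ℝ → Bool → Z → ℝ := fun t y x z => (1 - t) * f y x z + t * ftil y x z
    let m : ℝ → Z → ℝ := fun t z => (∫ y, y * ft t y true z ∂μ) / ∫ y, ft t y true z ∂μ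
    let Ψ : ℝ → ℝ := fun t => ∫ z, m t z * (∫ y, (ft t y true z + ft t y false z) ∂μ) ∂ν
    let piZ : Z → ℝ := fun z => (∫ y, f y true z ∂μ) / ∫ y, (f y true z + f y false z) ∂μ
    HasDerivWithinAt Ψ
      (∫ z, ∫ y,
        ((1 / piZ z * (y - m 0 z) + m 0 z - Ψ 0) * ftil y true z
          + (m 0 z - Ψ 0) * ftil y false z) ∂μ ∂ν)
      (Ici 0) 0 := by

  intro ft m Ψ piZ
  have hft_def : ft = fun t y x z => (1 - t) * f y x z + t * ftil y x z := rfl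
  have hm_def : m = fun t z => (∫ y, y * ft t y true z ∂μ) / ∫ y, ft t y true z ∂μ := rfl
  have hΨ_def : Ψ = fun t => ∫ z, m t z * (∫ y, (ft t y true z + ft t y false z) ∂μ) ∂ν := rfl
  have hpiZ_def : piZ = fun z =>
      (∫ y, f y true z ∂μ) / ∫ y, (f y true z + f y false z) ∂μ := rfl
  -- global integrability
  have hfκ : Integrable (fun p : ℝ × Bool × Z => f p.1 p.2.1 p.2.2)
      (μ.prod ((Measure.count : Measure Bool).prod ν)) := my_int_eq_one hf_one
  have hftκ : Integrable (fun p : ℝ × Bool × Z => ftil p.1 p.2.1 p.2.2)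
      (μ.prod ((Measure.count : Measure Bool).prod ν)) := my_int_eq_one hft_one
  have hCpos : 0 < C := by
    by_contra hCn
    push_neg at hCn
    have h0 : (fun p : ℝ × Bool × Z => ftil p.1 p.2.1 p.2.2)
        =ᵐ[μ.prod ((Measure.count : Measure Bool).prod ν)] 0 := by
      filter_upwards [hdom] with p hp
      have h1 := hft_nn p.1 p.2.1 p.2.2
      have h2 := hf_nn p.1 p.2.1 p.2.2
      have h3 : C * f p.1 p.2.1 p.2.2 ≤ 0 := mul_nonpos_of_nonpos_of_nonneg hCn h2
      simp only [Pi.zero_apply]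
      linarith
    rw [integral_congr_ae h0] at hft_one
    simp at hft_one
  -- measurability of slices
  have hgm1 : Measurable (fun q : ℝ × Z => f q.1 true q.2) :=
    hf_meas.comp (measurable_fst.prodMk (measurable_const.prodMk measurable_snd))
  have hgm0 : Measurable (fun q : ℝ × Z => f q.1 false q.2) :=
    hf_meas.comp (measurable_fst.prodMk (measurable_const.prodMk measurable_snd))
  have hhm1 : Measurable (fun q : ℝ × Z => ftil q.1 true q.2) :=
    hft_meas.comp (measurable_fst.prodMk (measurable_const.prodMk measurable_snd))
  have hhm0 : Measurable (fun q : ℝ × Z => ftil q.1 false q.2) :=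
    hft_meas.comp (measurable_fst.prodMk (measurable_const.prodMk measurable_snd))
  have hBm : Measurable (fun z => (∫ y, f y true z ∂μ)) :=
    hgm1.stronglyMeasurable.integral_prod_left'.measurable
  have hEm : Measurable (fun z => (∫ y, f y false z ∂μ)) :=
    hgm0.stronglyMeasurable.integral_prod_left'.measurable
  have hCm : Measurable (fun z => (∫ y, (f y true z + f y false z) ∂μ)) :=
    (hgm1.add hgm0).stronglyMeasurable.integral_prod_left'.measurable
  have hAm : Measurable (fun z => (∫ y, y * f y true z ∂μ)) :=
    (measurable_fst.mul hgm1).stronglyMeasurable.integral_prod_left'.measurable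
  have hTBm : Measurable (fun z => (∫ y, ftil y true z ∂μ)) :=
    hhm1.stronglyMeasurable.integral_prod_left'.measurable
  have hTCm : Measurable (fun z => (∫ y, (ftil y true z + ftil y false z) ∂μ)) :=
    (hhm1.add hhm0).stronglyMeasurable.integral_prod_left'.measurable
  have hTAm : Measurable (fun z => (∫ y, y * ftil y true z ∂μ)) :=
    (measurable_fst.mul hhm1).stronglyMeasurable.integral_prod_left'.measurable
  -- integrability of weighted densities
  have hyfκ : Integrable (fun p : ℝ × Bool × Z => p.1 * f p.1 p.2.1 p.2.2)
      (μ.prod ((Measure.count : Measure Bool).prod ν)) := by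
    refine Integrable.mono (hfκ.const_mul |M|) (measurable_fst.mul hf_meas).aestronglyMeasurable ?_
    filter_upwards [hbdd] with p hp
    rw [Real.norm_eq_abs, Real.norm_eq_abs, abs_mul, abs_mul, abs_abs]
    rcases (hf_nn p.1 p.2.1 p.2.2).eq_or_lt with h | h
    · rw [← h]; simp
    · exact mul_le_mul_of_nonneg_right ((hp h).trans (le_abs_self M)) (abs_nonneg _)
  have hyftκ : Integrable (fun p : ℝ × Bool × Z => p.1 * ftil p.1 p.2.1 p.2.2)
      (μ.prod ((Measure.count : Measure Bool).prod ν)) := by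
    refine Integrable.mono (hfκ.const_mul (|M| * C))
      (measurable_fst.mul hft_meas).aestronglyMeasurable ?_
    filter_upwards [hbdd, hdom] with p hb hd
    have h1 := hft_nn p.1 p.2.1 p.2.2
    have h2 := hf_nn p.1 p.2.1 p.2.2
    rw [Real.norm_eq_abs, Real.norm_eq_abs, abs_mul]
    rcases h1.eq_or_lt with h | h
    · rw [← h]; simp; positivity
    · have h3 : 0 < C * f p.1 p.2.1 p.2.2 := lt_of_lt_of_le h hd
      have h4 : 0 < f p.1 p.2.1 p.2.2 := by
        rcases h2.eq_or_lt with h5 | h5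
        · rw [← h5, mul_zero] at h3; linarith
        · exact h5
      have h6 : |p.1| ≤ |M| := (hb h4).trans (le_abs_self M)
      rw [abs_of_nonneg h1, abs_of_nonneg (by positivity : 0 ≤ |M| * C * f p.1 p.2.1 p.2.2)]
      calc |p.1| * ftil p.1 p.2.1 p.2.2 ≤ |M| * (C * f p.1 p.2.1 p.2.2) :=
            mul_le_mul h6 hd h1 (abs_nonneg M)
      _ = |M| * C * f p.1 p.2.1 p.2.2 := by ring
  -- slice facts (a.e. z)
  have hslice : ∀ᵐ z ∂ν, (Integrable (fun y => f y true z) μ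
      ∧ Integrable (fun y => f y false z) μ
      ∧ Integrable (fun y => ftil y true z) μ ∧ Integrable (fun y => ftil y false z) μ
      ∧ Integrable (fun y => y * f y true z) μ ∧ Integrable (fun y => y * ftil y true z) μ
      ∧ (∀ᵐ y ∂μ, 0 < f y true z → |y| ≤ M)
      ∧ (∀ᵐ y ∂μ, ftil y true z ≤ C * f y true z)
      ∧ (∀ᵐ y ∂μ, ftil y false z ≤ C * f y false z)) := by
    filter_upwards [slice_int hfκ true, slice_int hfκ false, slice_int hftκ true,
      slice_int hftκ false, slice_int hyfκ true, slice_int hyftκ true,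
      ae_slice hbdd true, ae_slice hdom true, ae_slice hdom false] with
      z h1 h2 h3 h4 h5 h6 h7 h8 h9
    exact ⟨h1, h2, h3, h4, h5, h6, h7, h8, h9⟩
  -- integrability of z ↦ c z and tilde version
  have hBint : Integrable (fun z => (∫ y, f y true z ∂μ)) ν := int_int hfκ true
  have hEint : Integrable (fun z => (∫ y, f y false z ∂μ)) ν := int_int hfκ false
  have hTBint : Integrable (fun z => (∫ y, ftil y true z ∂μ)) ν := int_int hftκ true
  have hTEint : Integrable (fun z => (∫ y, ftil y false z ∂μ)) ν := int_int hftκ false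
  have hc_split : (fun z => (∫ y, (f y true z + f y false z) ∂μ)) =ᵐ[ν] (fun z => (∫ y, f y true z ∂μ) + (∫ y, f y false z ∂μ)) := by
    filter_upwards [hslice] with z hz
    exact integral_add hz.1 hz.2.1
  have htc_split : (fun z => (∫ y, (ftil y true z + ftil y false z) ∂μ)) =ᵐ[ν] (fun z => (∫ y, ftil y true z ∂μ) + (∫ y, ftil y false z ∂μ)) := by
    filter_upwards [hslice] with z hz
    exact integral_add hz.2.2.1 hz.2.2.2.1
  have hCint : Integrable (fun z => (∫ y, (f y true z + f y false z) ∂μ)) ν := (hBint.add hEint).congr hc_split.symm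
  have hTCint : Integrable (fun z => (∫ y, (ftil y true z + ftil y false z) ∂μ)) ν := (hTBint.add hTEint).congr htc_split.symm
  have htc_one : (∫ z, (∫ y, (ftil y true z + ftil y false z) ∂μ) ∂ν) = 1 := by
    rw [integral_congr_ae htc_split, integral_add hTBint hTEint]
    have hfub : (∫ p, ftil p.1 p.2.1 p.2.2
        ∂(μ.prod ((Measure.count : Measure Bool).prod ν)))
        = (∫ z, (∫ y, ftil y true z ∂μ) ∂ν) + ∫ z, (∫ y, ftil y false z ∂μ) ∂ν := fubini_int hftκ
    rw [← hfub, hft_one]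
  have hδ : (0:ℝ) < 1/(2*(C+1)) := by positivity
  -- the three main a.e. conditions
  have h_bound : ∀ᵐ z ∂ν, ∀ t ∈ Metric.ball (0:ℝ) (1/(2*(C+1))),
      ‖((((∫ y, y * ftil y true z ∂μ) - (∫ y, y * f y true z ∂μ))*((∫ y, f y true z ∂μ) + t*((∫ y, ftil y true z ∂μ) - (∫ y, f y true z ∂μ))) - ((∫ y, y * f y true z ∂μ) + t*((∫ y, y * ftil y true z ∂μ) - (∫ y, y * f y true z ∂μ)))*((∫ y, ftil y true z ∂μ) - (∫ y, f y true z ∂μ)))/((∫ y, f y true z ∂μ) + t*((∫ y, ftil y true z ∂μ) - (∫ y, f y true z ∂μ)))^2)*((∫ y, (f y true z + f y false z) ∂μ) + t*((∫ y, (ftil y true z + ftil y false z) ∂μ) - (∫ y, (f y true z + f y false z) ∂μ))) + (((∫ y, y * f y true z ∂μ) + t*((∫ y, y * ftil y true z ∂μ) - (∫ y, y * f y true z ∂μ)))/((∫ y, f y true z ∂μ) + t*((∫ y, ftil y true z ∂μ) - (∫ y, f y true z ∂μ))))*((∫ y, (ftil y true z + ftil y false z) ∂μ) - (∫ y, (f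 y true z + f y false z) ∂μ))‖ ≤ 36*(|M|+1)*(C+1)^2 * (∫ y, (f y true z + f y false z) ∂μ) := by
    filter_upwards [hslice, hpos] with z hz hp
    obtain ⟨i1, i0, j1, j0, iy, jy, bd, d1, d0⟩ := hz
    obtain ⟨c_eq, tc_eq, hb0, he0, htb0, hte0, htbC, hteC, haM, htaM, hzero,
      hEq1, hEq2, hEq3, hlin⟩ := slice_facts2 μ M C hCpos f ftil z
      (fun y => hf_nn y true z) (fun y => hf_nn y false z) (fun y => hft_nn y true z)
      (fun y => hft_nn y false z) i1 i0 j1 j0 iy jy bd d1 d0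
    intro t htb
    have ht : |t| ≤ 1/(2*(C+1)) := by
      have h1 := Metric.mem_ball.mp htb
      rw [Real.dist_eq, sub_zero] at h1
      exact h1.le
    have hcnn : 0 ≤ (∫ y, (f y true z + f y false z) ∂μ) := by rw [c_eq]; linarith
    rcases hcnn.eq_or_lt with hc0 | hcpos
    · obtain ⟨z1, z2, z3, z4, z5, z6⟩ := hzero hc0.symm
      rw [Real.norm_eq_abs, ← hc0, z1, z2, z3, z4, z6]
      norm_num
    · have hbpos : 0 < (∫ y, f y true z ∂μ) := by
        have h2 := (le_div_iff₀ hcpos).mp (hp hcpos)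
        nlinarith
      have hbc : (∫ y, f y true z ∂μ) ≤ (∫ y, (f y true z + f y false z) ∂μ) := by rw [c_eq]; linarith
      have htc0 : 0 ≤ (∫ y, (ftil y true z + ftil y false z) ∂μ) := by rw [tc_eq]; linarith
      have htcC : (∫ y, (ftil y true z + ftil y false z) ∂μ) ≤ C * (∫ y, (f y true z + f y false z) ∂μ) := by
        rw [tc_eq, c_eq]; nlinarith
      have htaM2 : |(∫ y, y * ftil y true z ∂μ)| ≤ |M| * C * (∫ y, f y true z ∂μ) := by
        calc |(∫ y, y * ftil y true z ∂μ)| ≤ |M| * (∫ y, ftil y true z ∂μ) := htaM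
        _ ≤ |M| * (C * (∫ y, f y true z ∂μ)) := mul_le_mul_of_nonneg_left htbC (abs_nonneg M)
        _ = |M| * C * (∫ y, f y true z ∂μ) := by ring
      rw [Real.norm_eq_abs]
      exact Fbound M C (∫ y, y * f y true z ∂μ) (∫ y, f y true z ∂μ) (∫ y, (f y true z + f y false z) ∂μ) (∫ y, y * ftil y true z ∂μ) (∫ y, ftil y true z ∂μ) (∫ y, (ftil y true z + ftil y false z) ∂μ) t hCpos hbpos hbc htb0 htbC htc0 htcC
        haM htaM2 ht
  have h_diff : ∀ᵐ z ∂ν, ∀ t ∈ Metric.ball (0:ℝ) (1/(2*(C+1))),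
      HasDerivAt (fun s => m s z * (∫ y, (ft s y true z + ft s y false z) ∂μ))
        (((((∫ y, y * ftil y true z ∂μ) - (∫ y, y * f y true z ∂μ))*((∫ y, f y true z ∂μ) + t*((∫ y, ftil y true z ∂μ) - (∫ y, f y true z ∂μ))) - ((∫ y, y * f y true z ∂μ) + t*((∫ y, y * ftil y true z ∂μ) - (∫ y, y * f y true z ∂μ)))*((∫ y, ftil y true z ∂μ) - (∫ y, f y true z ∂μ)))/((∫ y, f y true z ∂μ) + t*((∫ y, ftil y true z ∂μ) - (∫ y, f y true z ∂μ)))^2)*((∫ y, (f y true z + f y false z) ∂μ) + t*((∫ y, (ftil y true z + ftil y false z) ∂μ) - (∫ y, (f y true z + f y false z) ∂μ))) + (((∫ y, y * f y true z ∂μ) + t*((∫ y, y * ftil y true z ∂μ) - (∫ y, y * f y true z ∂μ)))/((∫ y, f y true z ∂μ) + t*((∫ y, ftil y true z ∂μ) - (∫ y, f y true z ∂μ))))*((∫ y, (ftil y true z + ftil y false z) ∂μ) - (∫ y, (f y true z + f y false z) ∂μ))) t := by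
    filter_upwards [hslice, hpos] with z hz hp
    obtain ⟨i1, i0, j1, j0, iy, jy, bd, d1, d0⟩ := hz
    obtain ⟨c_eq, tc_eq, hb0, he0, htb0, hte0, htbC, hteC, haM, htaM, hzero,
      hEq1, hEq2, hEq3, hlin⟩ := slice_facts2 μ M C hCpos f ftil z
      (fun y => hf_nn y true z) (fun y => hf_nn y false z) (fun y => hft_nn y true z)
      (fun y => hft_nn y false z) i1 i0 j1 j0 iy jy bd d1 d0
    intro t htb
    have ht : |t| ≤ 1/(2*(C+1)) := by
      have h1 := Metric.mem_ball.mp htb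
      rw [Real.dist_eq, sub_zero] at h1
      exact h1.le
    have hfun : (fun s => m s z * (∫ y, (ft s y true z + ft s y false z) ∂μ))
        = fun s => (((∫ y, y * f y true z ∂μ) + s*((∫ y, y * ftil y true z ∂μ) - (∫ y, y * f y true z ∂μ)))/((∫ y, f y true z ∂μ) + s*((∫ y, ftil y true z ∂μ) - (∫ y, f y true z ∂μ))))*((∫ y, (f y true z + f y false z) ∂μ) + s*((∫ y, (ftil y true z + ftil y false z) ∂μ) - (∫ y, (f y true z + f y false z) ∂μ))) := by
      funext s
      simp only [hm_def, hft_def]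
      rw [hEq1 s, hEq2 s, hEq3 s]
    have hcnn : 0 ≤ (∫ y, (f y true z + f y false z) ∂μ) := by rw [c_eq]; linarith
    rcases hcnn.eq_or_lt with hc0 | hcpos
    · obtain ⟨z1, z2, z3, z4, z5, z6⟩ := hzero hc0.symm
      have hzfun : (fun s => m s z * (∫ y, (ft s y true z + ft s y false z) ∂μ))
          = fun _ => (0:ℝ) := by
        rw [hfun]
        funext s
        rw [← hc0, z1, z2, z3, z4, z6]
        norm_num
      have hzder : (((((∫ y, y * ftil y true z ∂μ) - (∫ y, y * f y true z ∂μ))*((∫ y, f y true z ∂μ) + t*((∫ y, ftil y true z ∂μ) - (∫ y, f y true z ∂μ))) - ((∫ y, y * f y true z ∂μ) + t*((∫ y, y * ftil y true z ∂μ) - (∫ y, y * f y true z ∂μ)))*((∫ y, ftil y true z ∂μ) - (∫ y, f y true z ∂μ)))/((∫ y, f y true z ∂μ) + t*((∫ y, ftil y true z ∂μ) - (∫ y, f y true z ∂μ)))^2)*((∫ y, (f y true z + f y false z) ∂μ) + t*((∫ y, (ftil y true z + ftil y false z) ∂μ) - (∫ y, (f y true z + f y false z) ∂μ))) + (((∫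 y, y * f y true z ∂μ) + t*((∫ y, y * ftil y true z ∂μ) - (∫ y, y * f y true z ∂μ)))/((∫ y, f y true z ∂μ) + t*((∫ y, ftil y true z ∂μ) - (∫ y, f y true z ∂μ))))*((∫ y, (ftil y true z + ftil y false z) ∂μ) - (∫ y, (f y true z + f y false z) ∂μ))) = 0 := by
        rw [← hc0, z1, z2, z3, z4, z6]
        norm_num
      rw [hzfun, hzder]
      exact hasDerivAt_const t 0
    · have hbpos : 0 < (∫ y, f y true z ∂μ) := by
        have h2 := (le_div_iff₀ hcpos).mp (hp hcpos)
        nlinarith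
      obtain ⟨hB1, hB2⟩ := Bpos (∫ y, f y true z ∂μ) (∫ y, ftil y true z ∂μ) C t hCpos hbpos htb0 htbC ht
      have hbne : (∫ y, f y true z ∂μ) + t*((∫ y, ftil y true z ∂μ) - (∫ y, f y true z ∂μ)) ≠ 0 := by
        have : (0:ℝ) < (∫ y, f y true z ∂μ)/2 := by linarith
        exact ne_of_gt (by linarith)
      rw [hfun]
      exact deriv_core (∫ y, y * f y true z ∂μ) (∫ y, f y true z ∂μ) (∫ y, (f y true z + f y false z) ∂μ) (∫ y, y * ftil y true z ∂μ) (∫ y, ftil y true z ∂μ) (∫ y, (ftil y true z + ftil y false z) ∂μ) t hbne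
  have hF_meas : ∀ᶠ t in nhds (0:ℝ), AEStronglyMeasurable
      (fun z => m t z * (∫ y, (ft t y true z + ft t y false z) ∂μ)) ν := by
    refine Filter.Eventually.of_forall (fun t => ?_)
    have h1 : Measurable (fun q : ℝ × Z =>
        q.1 * ((1 - t) * f q.1 true q.2 + t * ftil q.1 true q.2)) :=
      measurable_fst.mul ((hgm1.const_mul _).add (hhm1.const_mul _))
    have h2 : Measurable (fun q : ℝ × Z =>
        (1 - t) * f q.1 true q.2 + t * ftil q.1 true q.2) :=
      (hgm1.const_mul _).add (hhm1.const_mul _)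
    have h3 : Measurable (fun q : ℝ × Z =>
        ((1 - t) * f q.1 true q.2 + t * ftil q.1 true q.2)
          + ((1 - t) * f q.1 false q.2 + t * ftil q.1 false q.2)) :=
      h2.add ((hgm0.const_mul _).add (hhm0.const_mul _))
    exact ((h1.stronglyMeasurable.integral_prod_left'.measurable.div
      h2.stronglyMeasurable.integral_prod_left'.measurable).mul
      h3.stronglyMeasurable.integral_prod_left'.measurable).aestronglyMeasurable
  have hF_int : Integrable (fun z => m 0 z * (∫ y, (ft 0 y true z + ft 0 y false z) ∂μ)) ν := by
    have hFF0 : (fun z => m 0 z * (∫ y, (ft 0 y true z + ft 0 y false z) ∂μ))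
        = fun z => ((∫ y, y * f y true z ∂μ) / (∫ y, f y true z ∂μ)) * (∫ y, (f y true z + f y false z) ∂μ) := by
      funext z
      simp only [hm_def, hft_def, sub_zero, one_mul, zero_mul, add_zero]
    rw [hFF0]
    refine Integrable.mono (hCint.const_mul |M|)
      ((hAm.div hBm).mul hCm).aestronglyMeasurable ?_
    filter_upwards [hslice, hpos] with z hz hp
    obtain ⟨i1, i0, j1, j0, iy, jy, bd, d1, d0⟩ := hz
    obtain ⟨c_eq, tc_eq, hb0, he0, htb0, hte0, htbC, hteC, haM, htaM, hzero,
      hEq1, hEq2, hEq3, hlin⟩ := slice_facts2 μ M C hCpos f ftil z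
      (fun y => hf_nn y true z) (fun y => hf_nn y false z) (fun y => hft_nn y true z)
      (fun y => hft_nn y false z) i1 i0 j1 j0 iy jy bd d1 d0
    rw [Real.norm_eq_abs, Real.norm_eq_abs, abs_mul, abs_mul, abs_abs]
    have hcnn : 0 ≤ (∫ y, (f y true z + f y false z) ∂μ) := by rw [c_eq]; linarith
    rcases hcnn.eq_or_lt with hc0 | hcpos
    · rw [← hc0]
      simp
    · have hbpos : 0 < (∫ y, f y true z ∂μ) := by
        have h2 := (le_div_iff₀ hcpos).mp (hp hcpos)
        nlinarith
      have h3 : |(∫ y, y * f y true z ∂μ) / (∫ y, f y true z ∂μ)| ≤ |M| := by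
        rw [abs_div, abs_of_pos hbpos, div_le_iff₀ hbpos]
        exact haM
      exact mul_le_mul_of_nonneg_right h3 (abs_nonneg _)
  have hF'meas : AEStronglyMeasurable (fun z => ((((∫ y, y * ftil y true z ∂μ) - (∫ y, y * f y true z ∂μ))*((∫ y, f y true z ∂μ) + (0:ℝ)*((∫ y, ftil y true z ∂μ) - (∫ y, f y true z ∂μ))) - ((∫ y, y * f y true z ∂μ) + (0:ℝ)*((∫ y, y * ftil y true z ∂μ) - (∫ y, y * f y true z ∂μ)))*((∫ y, ftil y true z ∂μ) - (∫ y, f y true z ∂μ)))/((∫ y, f y true z ∂μ) + (0:ℝ)*((∫ y, ftil y true z ∂μ) - (∫ y, f y true z ∂μ)))^2)*((∫ y, (f y true z + f y false z) ∂μ) + (0:ℝ)*((∫ y, (ftil y true z + ftil y false z) ∂μ) - (∫ y, (f y true z + f y false z) ∂μ))) + (((∫ y, y * f y true z ∂μ) + (0:ℝ)*((∫ y, y * ftil y true z ∂μ) - (∫ y, y * f y true z ∂μ)))/((∫ y, f y true z ∂μ) + (0:ℝ)*((∫ y, ftil y true z ∂μ) - (∫ y, f y true z ∂μ))))*((∫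 y, (ftil y true z + ftil y false z) ∂μ) - (∫ y, (f y true z + f y false z) ∂μ))) ν := by
    have q1 : Measurable (fun z => (∫ y, y * ftil y true z ∂μ) - (∫ y, y * f y true z ∂μ)) := hTAm.sub hAm
    have q2 : Measurable (fun z => (∫ y, ftil y true z ∂μ) - (∫ y, f y true z ∂μ)) := hTBm.sub hBm
    have q3 : Measurable (fun z => (∫ y, (ftil y true z + ftil y false z) ∂μ) - (∫ y, (f y true z + f y false z) ∂μ)) := hTCm.sub hCm
    have pB : Measurable (fun z => (∫ y, f y true z ∂μ) + (0:ℝ)*((∫ y, ftil y true z ∂μ) - (∫ y, f y true z ∂μ))) :=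
      hBm.add (measurable_const.mul q2)
    have pA : Measurable (fun z => (∫ y, y * f y true z ∂μ) + (0:ℝ)*((∫ y, y * ftil y true z ∂μ) - (∫ y, y * f y true z ∂μ))) :=
      hAm.add (measurable_const.mul q1)
    have pC : Measurable (fun z => (∫ y, (f y true z + f y false z) ∂μ) + (0:ℝ)*((∫ y, (ftil y true z + ftil y false z) ∂μ) - (∫ y, (f y true z + f y false z) ∂μ))) :=
      hCm.add (measurable_const.mul q3)
    exact ((((q1.mul pB).sub (pA.mul q2)).div (pB.pow_const 2)).mul pC).add
      ((pA.div pB).mul q3) |>.aestronglyMeasurable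
  obtain ⟨hF'int, hderiv⟩ := hasDerivAt_integral_of_dominated_loc_of_deriv_le
    (F := fun t z => m t z * (∫ y, (ft t y true z + ft t y false z) ∂μ))
    (F' := fun t z => ((((∫ y, y * ftil y true z ∂μ) - (∫ y, y * f y true z ∂μ))*((∫ y, f y true z ∂μ) + t*((∫ y, ftil y true z ∂μ) - (∫ y, f y true z ∂μ))) - ((∫ y, y * f y true z ∂μ) + t*((∫ y, y * ftil y true z ∂μ) - (∫ y, y * f y true z ∂μ)))*((∫ y, ftil y true z ∂μ) - (∫ y, f y true z ∂μ)))/((∫ y, f y true z ∂μ) + t*((∫ y, ftil y true z ∂μ) - (∫ y, f y true z ∂μ)))^2)*((∫ y, (f y true z + f y false z) ∂μ) + t*((∫ y, (ftil y true z + ftil y false z) ∂μ) - (∫ y, (f y true z + f y false z) ∂μ))) + (((∫ y, y * f y true z ∂μ) + t*((∫ y, y * ftil y true z ∂μ) - (∫ y, y * f y true z ∂μ)))/((∫ y, f y true z ∂μ) + t*((∫ y, ftil y true z ∂μ) - (∫ y, f y true z ∂μ))))*((∫ y, (ftil y true z + ftil y false z) ∂μ) - (∫ y, (f y true z + f y false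 z) ∂μ)))
    (bound := fun z => 36*(|M|+1)*(C+1)^2 * (∫ y, (f y true z + f y false z) ∂μ))
    (Metric.ball_mem_nhds 0 hδ) hF_meas hF_int hF'meas h_bound (hCint.const_mul _) h_diff
  -- identify the derivative with the claimed expression
  have hF'int2 : Integrable (fun z => ((((∫ y, y * ftil y true z ∂μ) - (∫ y, y * f y true z ∂μ))*((∫ y, f y true z ∂μ) + (0:ℝ)*((∫ y, ftil y true z ∂μ) - (∫ y, f y true z ∂μ))) - ((∫ y, y * f y true z ∂μ) + (0:ℝ)*((∫ y, y * ftil y true z ∂μ) - (∫ y, y * f y true z ∂μ)))*((∫ y, ftil y true z ∂μ) - (∫ y, f y true z ∂μ)))/((∫ y, f y true z ∂μ) + (0:ℝ)*((∫ y, ftil y true z ∂μ) - (∫ y, f y true z ∂μ)))^2)*((∫ y, (f y true z + f y false z) ∂μ) + (0:ℝ)*((∫ y, (ftil y true z + ftil y false z) ∂μ) - (∫ y, (f y true z + f y false z) ∂μ))) + (((∫ y, y * f y true z ∂μ) + (0:ℝ)*((∫ y, y * ftil y true z ∂μ) - (∫ y, y * f y true z ∂μ)))/((∫ y, f y true z ∂μ)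 + (0:ℝ)*((∫ y, ftil y true z ∂μ) - (∫ y, f y true z ∂μ))))*((∫ y, (ftil y true z + ftil y false z) ∂μ) - (∫ y, (f y true z + f y false z) ∂μ))) ν := hF'int
  have hΨ0 : Ψ 0 = ∫ z, ((∫ y, y * f y true z ∂μ) / (∫ y, f y true z ∂μ)) * (∫ y, (f y true z + f y false z) ∂μ) ∂ν := by
    simp only [hΨ_def, hm_def, hft_def, sub_zero, one_mul, zero_mul, add_zero]
  have hF0int2 : Integrable (fun z => ((∫ y, y * f y true z ∂μ) / (∫ y, f y true z ∂μ)) * (∫ y, (f y true z + f y false z) ∂μ)) ν := by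
    have hFF0 : (fun z => m 0 z * (∫ y, (ft 0 y true z + ft 0 y false z) ∂μ))
        = fun z => ((∫ y, y * f y true z ∂μ) / (∫ y, f y true z ∂μ)) * (∫ y, (f y true z + f y false z) ∂μ) := by
      funext z
      simp only [hm_def, hft_def, sub_zero, one_mul, zero_mul, add_zero]
    rw [← hFF0]
    exact hF_int
  have hIeq : (fun z => ∫ y, ((1 / piZ z * (y - m 0 z) + m 0 z - Ψ 0) * ftil y true z
        + (m 0 z - Ψ 0) * ftil y false z) ∂μ)
      =ᵐ[ν] (fun z => (((((∫ y, y * ftil y true z ∂μ) - (∫ y, y * f y true z ∂μ))*((∫ y, f y true z ∂μ) + (0:ℝ)*((∫ y, ftil y true z ∂μ) - (∫ y, f y true z ∂μ))) - ((∫ y, y * f y true z ∂μ) + (0:ℝ)*((∫ y, y * ftil y true z ∂μ) - (∫ y, y * f y true z ∂μ)))*((∫ y, ftil y true z ∂μ) - (∫ y, f y true z ∂μ)))/((∫ y, f y true z ∂μ) + (0:ℝ)*((∫ y, ftil y true z ∂μ) - (∫ y, f y true z ∂μ)))^2)*((∫ y, (f y true z + f y false z) ∂μ) + (0:ℝ)*((∫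 y, (ftil y true z + ftil y false z) ∂μ) - (∫ y, (f y true z + f y false z) ∂μ))) + (((∫ y, y * f y true z ∂μ) + (0:ℝ)*((∫ y, y * ftil y true z ∂μ) - (∫ y, y * f y true z ∂μ)))/((∫ y, f y true z ∂μ) + (0:ℝ)*((∫ y, ftil y true z ∂μ) - (∫ y, f y true z ∂μ))))*((∫ y, (ftil y true z + ftil y false z) ∂μ) - (∫ y, (f y true z + f y false z) ∂μ)))
        + (((∫ y, y * f y true z ∂μ) / (∫ y, f y true z ∂μ)) * (∫ y, (f y true z + f y false z) ∂μ) - Ψ 0 * (∫ y, (ftil y true z + ftil y false z) ∂μ))) := by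
    filter_upwards [hslice, hpos] with z hz hp
    obtain ⟨i1, i0, j1, j0, iy, jy, bd, d1, d0⟩ := hz
    obtain ⟨c_eq, tc_eq, hb0, he0, htb0, hte0, htbC, hteC, haM, htaM, hzero,
      hEq1, hEq2, hEq3, hlin⟩ := slice_facts2 μ M C hCpos f ftil z
      (fun y => hf_nn y true z) (fun y => hf_nn y false z) (fun y => hft_nn y true z)
      (fun y => hft_nn y false z) i1 i0 j1 j0 iy jy bd d1 d0
    simp only [hpiZ_def, hm_def, hft_def, sub_zero, one_mul, zero_mul, add_zero]
    rw [integral_congr_ae (Filter.Eventually.of_forall (fun y => show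
      (1 / ((∫ y, f y true z ∂μ) / (∫ y, (f y true z + f y false z) ∂μ)) * (y - (∫ y, y * f y true z ∂μ) / (∫ y, f y true z ∂μ)) + (∫ y, y * f y true z ∂μ) / (∫ y, f y true z ∂μ) - Ψ 0) * ftil y true z
        + ((∫ y, y * f y true z ∂μ) / (∫ y, f y true z ∂μ) - Ψ 0) * ftil y false z
      = ((1 / ((∫ y, f y true z ∂μ) / (∫ y, (f y true z + f y false z) ∂μ))) * (y - ((∫ y, y * f y true z ∂μ) / (∫ y, f y true z ∂μ))) + ((∫ y, y * f y true z ∂μ) / (∫ y, f y true z ∂μ) - Ψ 0)) * ftil y true z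
        + ((∫ y, y * f y true z ∂μ) / (∫ y, f y true z ∂μ) - Ψ 0) * ftil y false z from by ring))]
    rw [hlin (1 / ((∫ y, f y true z ∂μ) / (∫ y, (f y true z + f y false z) ∂μ))) ((∫ y, y * f y true z ∂μ) / (∫ y, f y true z ∂μ)) ((∫ y, y * f y true z ∂μ) / (∫ y, f y true z ∂μ) - Ψ 0)]
    rw [tc_eq]
    have hcnn : 0 ≤ (∫ y, (f y true z + f y false z) ∂μ) := by rw [c_eq]; linarith
    rcases hcnn.eq_or_lt with hc0 | hcpos
    · obtain ⟨z1, z2, z3, z4, z5, z6⟩ := hzero hc0.symm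
      rw [← hc0, z1, z2, z3, z4, z5]
      norm_num
    · have hbpos : 0 < (∫ y, f y true z ∂μ) := by
        have h2 := (le_div_iff₀ hcpos).mp (hp hcpos)
        nlinarith
      have hbne : (∫ y, f y true z ∂μ) ≠ 0 := ne_of_gt hbpos
      have hcne : (∫ y, (f y true z + f y false z) ∂μ) ≠ 0 := ne_of_gt hcpos
      field_simp
      ring
  have hDeq : (∫ z, ∫ y, ((1 / piZ z * (y - m 0 z) + m 0 z - Ψ 0) * ftil y true z
        + (m 0 z - Ψ 0) * ftil y false z) ∂μ ∂ν)
      = ∫ z, (((((∫ y, y * ftil y true z ∂μ) - (∫ y, y * f y true z ∂μ))*((∫ y, f y true z ∂μ) + (0:ℝ)*((∫ y, ftil y true z ∂μ) - (∫ y, f y true z ∂μ))) - ((∫ y, y * f y true z ∂μ) + (0:ℝ)*((∫ y, y * ftil y true z ∂μ) - (∫ y, y * f y true z ∂μ)))*((∫ y, ftil y true z ∂μ) - (∫ y, f y true z ∂μ)))/((∫ y, f y true z ∂μ) + (0:ℝ)*((∫ y, ftil y true z ∂μ) - (∫ y, f y true z ∂μ)))^2)*((∫ y, (f y true z + f y false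 z) ∂μ) + (0:ℝ)*((∫ y, (ftil y true z + ftil y false z) ∂μ) - (∫ y, (f y true z + f y false z) ∂μ))) + (((∫ y, y * f y true z ∂μ) + (0:ℝ)*((∫ y, y * ftil y true z ∂μ) - (∫ y, y * f y true z ∂μ)))/((∫ y, f y true z ∂μ) + (0:ℝ)*((∫ y, ftil y true z ∂μ) - (∫ y, f y true z ∂μ))))*((∫ y, (ftil y true z + ftil y false z) ∂μ) - (∫ y, (f y true z + f y false z) ∂μ))) ∂ν := by
    refine Eq.trans (integral_congr_ae hIeq) ?_
    have hsub : Integrable (fun z => (((∫ y, y * f y true z ∂μ) / (∫ y, f y true z ∂μ)) * (∫ y, (f y true z + f y false z) ∂μ) - Ψ 0 * (∫ y, (ftil y true z + ftil y false z) ∂μ))) ν :=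
      hF0int2.sub (hTCint.const_mul (Ψ 0))
    rw [integral_add hF'int2 hsub,
      integral_sub hF0int2 (hTCint.const_mul (Ψ 0)), integral_const_mul, htc_one, ← hΨ0]
    ring
  rw [hDeq]
  exact hderiv.hasDerivWithinAt
end

section
/- Let (Ω, ℱ, P) be a probability space, X: Ω → {0,1} measurable, Y ∈ L¹(P), 𝒢 = σ(Z) for a measurable Z. Let π be a 𝒢-measurable version of E[X | 𝒢] and let m be a 𝒢-measurable, integrable random variable with E[X·Y | 𝒢] = π·m a.s. Let π̂ and m̂ be 𝒢-measurable with ε ≤ π̂ ≤ 1 a.s. for some ε > 0 and m̂ bounded. Then the following exact identity holds: E[ (X/π̂)·(Y − m̂) + m̂ ] − E[m] = E[ (π/π̂ − 1)·(m − m̂) ]. Consequently, by Cauchy–Schwarz, the bias of the augmented IPW functional is bounded by ‖π/π̂ − 1‖_{L²(P)} · ‖m − m̂‖_{L²(P)} when these quantities are square-integrable (the 'rate double robustness' bound). -/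
/-! Pulling the `𝒢`-measurable weight `π̂⁻¹` and the `𝒢`-measurable `m̂` out of the
conditional expectation turns `E[X (Y - m̂) / π̂]` into `E[π (m - m̂) / π̂]`, since
`E[X (Y - m̂) | 𝒢] = π m - π m̂`. Subtracting `E[m - m̂]` gives the identity, and the bound is
Cauchy–Schwarz in `L²`. -/

open MeasureTheory

section

variable {Ω : Type*} {m mΩ : MeasurableSpace Ω} {μ : Measure Ω}

theorem condExp_mul_sub_of_stronglyMeasurable {X Y π r g : Ω → ℝ}
    (hg : StronglyMeasurable[m] g) (hX : Integrable X μ)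
    (hXY : Integrable (fun ω => X ω * Y ω) μ) (hXg : Integrable (X * g) μ)
    (hπ : π =ᵐ[μ] μ[X | m]) (hr : μ[fun ω => X ω * Y ω | m] =ᵐ[μ] fun ω => π ω * r ω) :
    μ[fun ω => X ω * (Y ω - g ω) | m] =ᵐ[μ] fun ω => π ω * (r ω - g ω) := by
  have hsplit : (fun ω => X ω * (Y ω - g ω)) = (fun ω => X ω * Y ω) - X * g := by
    ext ω; simp only [Pi.sub_apply, Pi.mul_apply]; ring
  rw [hsplit]
  filter_upwards [condExp_sub hXY hXg m, condExp_mul_of_stronglyMeasurable_right hg hXg hX,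
    hr, hπ] with ω hsub hpull hr hπ
  simp only [hsub, hpull, hr, hπ, Pi.sub_apply, Pi.mul_apply]
  ring

theorem integrable_mul_of_condExp_eq {w h k : Ω → ℝ} {C : ℝ}
    (hw : AEStronglyMeasurable w μ) (hwC : ∀ᵐ ω ∂μ, ‖w ω‖ ≤ C) (hk : μ[h | m] =ᵐ[μ] k) :
    Integrable (fun ω => w ω * k ω) μ :=
  ((integrable_condExp (m := m) (f := h)).bdd_mul hw hwC).congr
    (hk.mono fun ω hω => by simp only [hω])

theorem integral_mul_eq_of_condExp_eq (hm : m ≤ mΩ) [SigmaFinite (μ.trim hm)]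
    {w h k : Ω → ℝ} {C : ℝ} (hw : StronglyMeasurable[m] w) (hwC : ∀ᵐ ω ∂μ, ‖w ω‖ ≤ C)
    (hh : Integrable h μ) (hk : μ[h | m] =ᵐ[μ] k) :
    ∫ ω, w ω * h ω ∂μ = ∫ ω, w ω * k ω ∂μ := by
  have hw' : AEStronglyMeasurable w μ := (hw.mono hm).aestronglyMeasurable
  rw [← integral_condExp hm (f := fun ω => w ω * h ω)]
  refine integral_congr_ae ?_
  filter_upwards [condExp_mul_of_stronglyMeasurable_left hw (hh.bdd_mul hw' hwC) hh, hk]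
    with ω hpull hω
  rw [← hω]
  exact hpull

theorem integral_aipw_sub_integral_eq (hm : m ≤ mΩ) [IsFiniteMeasure μ] {X Y π r p g : Ω → ℝ}
    {C ε : ℝ} (hX : AEStronglyMeasurable X μ) (hX_bd : ∀ᵐ ω ∂μ, ‖X ω‖ ≤ C) (hY : Integrable Y μ)
    (hε : 0 < ε) (hp : StronglyMeasurable[m] p) (hp_bd : ∀ᵐ ω ∂μ, ε ≤ p ω)
    (hg : StronglyMeasurable[m] g) (hg_int : Integrable g μ) (hr_int : Integrable r μ)
    (hπ : π =ᵐ[μ] μ[X | m]) (hr : μ[fun ω => X ω * Y ω | m] =ᵐ[μ] fun ω => π ω * r ω) :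
    (∫ ω, ((X ω / p ω) * (Y ω - g ω) + g ω) ∂μ) - ∫ ω, r ω ∂μ
      = ∫ ω, (π ω / p ω - 1) * (r ω - g ω) ∂μ := by
  have hres_int : Integrable (fun ω => X ω * (Y ω - g ω)) μ := (hY.sub hg_int).bdd_mul hX hX_bd
  have hres : μ[fun ω => X ω * (Y ω - g ω) | m] =ᵐ[μ] fun ω => π ω * (r ω - g ω) :=
    condExp_mul_sub_of_stronglyMeasurable hg (.of_bound hX C hX_bd) (hY.bdd_mul hX hX_bd)
      (hg_int.bdd_mul hX hX_bd) hπ hr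
  have hinv : StronglyMeasurable[m] fun ω => (p ω)⁻¹ := hp.measurable.inv.stronglyMeasurable
  have hinv_bd : ∀ᵐ ω ∂μ, ‖(p ω)⁻¹‖ ≤ ε⁻¹ := by
    filter_upwards [hp_bd] with ω hω
    rw [norm_inv, Real.norm_of_nonneg (hε.le.trans hω)]
    exact inv_anti₀ hε hω
  have hlhs : ∫ ω, ((X ω / p ω) * (Y ω - g ω) + g ω) ∂μ
      = (∫ ω, (p ω)⁻¹ * (X ω * (Y ω - g ω)) ∂μ) + ∫ ω, g ω ∂μ := by
    rw [← integral_add (hres_int.bdd_mul (hinv.mono hm).aestronglyMeasurable hinv_bd) hg_int]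
    congr with ω; ring
  have hrhs : ∫ ω, (π ω / p ω - 1) * (r ω - g ω) ∂μ
      = (∫ ω, (p ω)⁻¹ * (π ω * (r ω - g ω)) ∂μ) - (∫ ω, r ω ∂μ - ∫ ω, g ω ∂μ) := by
    have hdiff_int : Integrable (fun ω => r ω - g ω) μ := hr_int.sub hg_int
    rw [← integral_sub hr_int hg_int, ← integral_sub (integrable_mul_of_condExp_eq
      (hinv.mono hm).aestronglyMeasurable hinv_bd hres) hdiff_int]
    congr with ω; ring
  rw [hlhs, hrhs, integral_mul_eq_of_condExp_eq hm hinv hinv_bd hres_int hres]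
  ring

theorem abs_integral_mul_le_eLpNorm_mul_eLpNorm {f g : Ω → ℝ} (hf : MemLp f 2 μ)
    (hg : MemLp g 2 μ) :
    |∫ ω, f ω * g ω ∂μ| ≤ (eLpNorm f 2 μ).toReal * (eLpNorm g 2 μ).toReal := by
  have hinner : ∫ ω, f ω * g ω ∂μ = inner ℝ (hf.toLp f) (hg.toLp g) := by
    rw [L2.inner_def]
    refine integral_congr_ae ?_
    filter_upwards [hf.coeFn_toLp, hg.coeFn_toLp] with ω hfω hgω
    rw [hfω, hgω, RCLike.inner_apply, conj_trivial, mul_comm]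
  rw [hinner, ← Lp.norm_toLp f hf, ← Lp.norm_toLp g hg]
  exact abs_real_inner_le_norm _ _

end

theorem stmt_6_general {Ω E : Type*} [mΩ : MeasurableSpace Ω] [MeasurableSpace E]
    (μ : Measure Ω) [IsProbabilityMeasure μ]
    (X Y : Ω → ℝ) (Z : Ω → E)
    (hX : Measurable X) (hX01 : ∀ ω, X ω = 0 ∨ X ω = 1)
    (hY : Integrable Y μ) (hZ : Measurable Z)
    (𝒢 : MeasurableSpace Ω) (h𝒢 : 𝒢 = MeasurableSpace.comap Z inferInstance)
    (π m πhat mhat : Ω → ℝ) (ε : ℝ) (hε : 0 < ε)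
    (hπ_ver : π =ᵐ[μ] μ[X | 𝒢])
    (hm_int : Integrable m μ)
    (hXYm : μ[fun ω => X ω * Y ω | 𝒢] =ᵐ[μ] fun ω => π ω * m ω)
    (hπhat_meas : Measurable[𝒢] πhat)
    (hπhat_bd : ∀ᵐ ω ∂μ, ε ≤ πhat ω ∧ πhat ω ≤ 1)
    (hmhat_meas : Measurable[𝒢] mhat)
    (hmhat_bdd : ∃ B, ∀ ω, |mhat ω| ≤ B) :
    ((∫ ω, ((X ω / πhat ω) * (Y ω - mhat ω) + mhat ω) ∂μ) - ∫ ω, m ω ∂μ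
      = ∫ ω, (π ω / πhat ω - 1) * (m ω - mhat ω) ∂μ) ∧
    (MemLp (fun ω => π ω / πhat ω - 1) 2 μ → MemLp (fun ω => m ω - mhat ω) 2 μ →
      |(∫ ω, ((X ω / πhat ω) * (Y ω - mhat ω) + mhat ω) ∂μ) - ∫ ω, m ω ∂μ|
        ≤ (eLpNorm (fun ω => π ω / πhat ω - 1) 2 μ).toReal
          * (eLpNorm (fun ω => m ω - mhat ω) 2 μ).toReal) := by
  obtain ⟨B, hB⟩ := hmhat_bdd
  have hle : 𝒢 ≤ mΩ := h𝒢 ▸ hZ.comap_le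
  have hX_bd : ∀ᵐ ω ∂μ, ‖X ω‖ ≤ 1 := .of_forall fun ω => by rcases hX01 ω with h | h <;> simp [h]
  have hmhat_int : Integrable mhat μ :=
    .of_bound (hmhat_meas.mono hle le_rfl).aestronglyMeasurable B (.of_forall hB)
  have hidentity := integral_aipw_sub_integral_eq hle hX.aestronglyMeasurable hX_bd hY hε
    hπhat_meas.stronglyMeasurable (hπhat_bd.mono fun _ h => h.1) hmhat_meas.stronglyMeasurable
    hmhat_int hm_int hπ_ver hXYm
  exact ⟨hidentity, fun hf hg => hidentity ▸ abs_integral_mul_le_eLpNorm_mul_eLpNorm hf hg⟩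

/-- Exact double-robustness identity and rate double-robustness bound for
the augmented IPW functional: with binary `X`, integrable `Y`, `𝒢 = σ(Z)`, `π` a
`𝒢`-measurable version of `E[X | 𝒢]`, `m` `𝒢`-measurable integrable with
`E[XY | 𝒢] = π·m` a.s., and `𝒢`-measurable nuisance estimates `ε ≤ π̂ ≤ 1` a.s., `m̂`
bounded, one has `E[(X/π̂)(Y − m̂) + m̂] − E[m] = E[(π/π̂ − 1)(m − m̂)]`; hence by
Cauchy–Schwarz the bias is bounded by `‖π/π̂ − 1‖₂·‖m − m̂‖₂` when these are in `L²`. -/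
theorem stmt_6 {Ω E : Type*} [mΩ : MeasurableSpace Ω] [MeasurableSpace E]
    (μ : Measure Ω) [IsProbabilityMeasure μ]
    (X Y : Ω → ℝ) (Z : Ω → E)
    (hX : Measurable X) (hX01 : ∀ ω, X ω = 0 ∨ X ω = 1)
    (hY : Integrable Y μ) (hZ : Measurable Z)
    (𝒢 : MeasurableSpace Ω) (h𝒢 : 𝒢 = MeasurableSpace.comap Z inferInstance)
    (π m πhat mhat : Ω → ℝ) (ε : ℝ) (hε : 0 < ε)
    (hπ_meas : Measurable[𝒢] π)
    (hπ_ver : π =ᵐ[μ] μ[X | 𝒢])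
    (hm_meas : Measurable[𝒢] m) (hm_int : Integrable m μ)
    (hXYm : μ[fun ω => X ω * Y ω | 𝒢] =ᵐ[μ] fun ω => π ω * m ω)
    (hπhat_meas : Measurable[𝒢] πhat)
    (hπhat_bd : ∀ᵐ ω ∂μ, ε ≤ πhat ω ∧ πhat ω ≤ 1)
    (hmhat_meas : Measurable[𝒢] mhat)
    (hmhat_bdd : ∃ B, ∀ ω, |mhat ω| ≤ B) :
    ((∫ ω, ((X ω / πhat ω) * (Y ω - mhat ω) + mhat ω) ∂μ) - ∫ ω, m ω ∂μ
      = ∫ ω, (π ω / πhat ω - 1) * (m ω - mhat ω) ∂μ) ∧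
    (MemLp (fun ω => π ω / πhat ω - 1) 2 μ → MemLp (fun ω => m ω - mhat ω) 2 μ →
      |(∫ ω, ((X ω / πhat ω) * (Y ω - mhat ω) + mhat ω) ∂μ) - ∫ ω, m ω ∂μ|
        ≤ (eLpNorm (fun ω => π ω / πhat ω - 1) 2 μ).toReal
          * (eLpNorm (fun ω => m ω - mhat ω) 2 μ).toReal) :=
  stmt_6_general (mΩ := mΩ) μ X Y Z hX hX01 hY hZ 𝒢 h𝒢 π m πhat mhat ε hε hπ_ver hm_int hXYm
    hπhat_meas hπhat_bd hmhat_meas hmhat_bdd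
end

section
/- Let (𝒵, 𝒜, ν) be a σ-finite measure space, μ_Y and μ_X σ-finite measures on ℝ, and let P and P̃ be probability measures on ℝ × ℝ × 𝒵 with densities f and f̃ with respect to μ_Y ⊗ μ_X ⊗ ν. Assume: (i) |y| ≤ M and |x| ≤ M a.e. on {f > 0} for some M < ∞; (ii) f̃ ≤ C·f a.e. for some constant C. For t ∈ [0,1) set f_t = (1−t)f + t·f̃ and, where f_t(z) := ∫∫ f_t(y,x,z) dμ_Y dμ_X > 0, define m_t(z) = ∫∫ y f_t(y,x,z) dμ_Y dμ_X / f_t(z), π_t(z) = ∫∫ x f_t(y,x,z) dμ_Y dμ_X / f_t(z), and Ψ(t) = ∫∫∫ (y − m_t(z))(x − π_t(z)) f_t(y,x,z) dμ_Y dμ_X dν. Then t ↦ Ψ(t) has a right derivative at t = 0 equal to ∫ [ (y − m_0(z))(x − π_0(z)) − Ψ(0) ] dP̃(y,x,z). That is, the expected conditional covariance is pathwise differentiable with efficient influence function (Y − E_P(Y|Z))(X − E_P(X|Z)) − Ψ(P). -/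
set_option maxHeartbeats 1000000

open MeasureTheory Set Filter

namespace S8

variable {Z : Type*} [MeasurableSpace Z]

def wY (g : ℝ → ℝ → Z → ℝ) : ℝ → ℝ → Z → ℝ := fun y x z => y * g y x z
def wX (g : ℝ → ℝ → Z → ℝ) : ℝ → ℝ → Z → ℝ := fun y x z => x * g y x z
def wP (g : ℝ → ℝ → Z → ℝ) : ℝ → ℝ → Z → ℝ := fun y x z => y * x * g y x z

noncomputable def I2 (μX μY : Measure ℝ) (g : ℝ → ℝ → Z → ℝ) (z : Z) : ℝ :=
  ∫ w : ℝ × ℝ, g w.2 w.1 z ∂(μX.prod μY)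

noncomputable def mI (μX μY : Measure ℝ) (g h : ℝ → ℝ → Z → ℝ) (t : ℝ) (z : Z) : ℝ :=
  (1 - t) * I2 μX μY g z + t * I2 μX μY h z

noncomputable def GG (μX μY : Measure ℝ) (f ftil : ℝ → ℝ → Z → ℝ) (t : ℝ) (z : Z) : ℝ :=
  mI μX μY (wP f) (wP ftil) t z -
    mI μX μY (wY f) (wY ftil) t z * mI μX μY (wX f) (wX ftil) t z / mI μX μY f ftil t z

noncomputable def GG' (μX μY : Measure ℝ) (f ftil : ℝ → ℝ → Z → ℝ) (t : ℝ) (z : Z) : ℝ :=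
  (I2 μX μY (wP ftil) z - I2 μX μY (wP f) z) -
    (((I2 μX μY (wY ftil) z - I2 μX μY (wY f) z) * mI μX μY (wX f) (wX ftil) t z +
        mI μX μY (wY f) (wY ftil) t z * (I2 μX μY (wX ftil) z - I2 μX μY (wX f) z)) *
          mI μX μY f ftil t z -
        mI μX μY (wY f) (wY ftil) t z * mI μX μY (wX f) (wX ftil) t z *
          (I2 μX μY ftil z - I2 μX μY f z)) /
      (mI μX μY f ftil t z) ^ 2

/-- pointwise bounds -/
lemma bnds {y x fv tv M C' : ℝ} (hf : 0 ≤ fv) (ht : 0 ≤ tv) (hM : 0 ≤ M) (hC : 0 ≤ C')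
    (hb : 0 < fv → |y| ≤ M ∧ |x| ≤ M) (hd : tv ≤ C' * fv) :
    |y * fv| ≤ M * fv ∧ |x * fv| ≤ M * fv ∧ |y * x * fv| ≤ M ^ 2 * fv ∧ |tv| ≤ C' * fv ∧
      |y * tv| ≤ C' * M * fv ∧ |x * tv| ≤ C' * M * fv ∧ |y * x * tv| ≤ C' * M ^ 2 * fv := by
  rcases hf.eq_or_lt with h | h
  · have htv : tv = 0 := le_antisymm (by simpa [← h] using hd) ht
    simp [← h, htv]
  · obtain ⟨hy, hx⟩ := hb h
    have h1 : |y * fv| = |y| * fv := by rw [abs_mul, abs_of_nonneg hf]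
    have h2 : |x * fv| = |x| * fv := by rw [abs_mul, abs_of_nonneg hf]
    have h3 : |y * x * fv| = |y| * |x| * fv := by rw [abs_mul, abs_mul, abs_of_nonneg hf]
    have h4 : |tv| = tv := abs_of_nonneg ht
    have h5 : |y * tv| = |y| * tv := by rw [abs_mul, abs_of_nonneg ht]
    have h6 : |x * tv| = |x| * tv := by rw [abs_mul, abs_of_nonneg ht]
    have h7 : |y * x * tv| = |y| * |x| * tv := by rw [abs_mul, abs_mul, abs_of_nonneg ht]
    have hy0 := abs_nonneg y
    have hx0 := abs_nonneg x
    have key : |y| * |x| ≤ M * M := mul_le_mul hy hx hx0 hM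
    refine ⟨?_, ?_, ?_, ?_, ?_, ?_, ?_⟩
    · rw [h1]; nlinarith [h.le]
    · rw [h2]; nlinarith [h.le]
    · rw [h3]; nlinarith [h.le]
    · rw [h4]; exact hd
    · rw [h5]; nlinarith [h.le, mul_le_mul_of_nonneg_left hd hy0]
    · rw [h6]; nlinarith [h.le, mul_le_mul_of_nonneg_left hd hx0]
    · rw [h7]; nlinarith [h.le, mul_le_mul_of_nonneg_left hd (mul_nonneg hy0 hx0), mul_le_mul_of_nonneg_right key ht]

/-- lower bound for the mixed denominator -/
lemma aux_pos {a ta C' s : ℝ} (hC : 0 ≤ C') (ha : 0 < a) (hta0 : 0 ≤ ta) (htaC : ta ≤ C' * a)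
    (hs : |s| < 1 / (2 * (C' + 1))) : a / 2 ≤ (1 - s) * a + s * ta := by
  have hC1 : (0:ℝ) < C' + 1 := by linarith
  have h2 : |s| * (C' + 1) < 1 / 2 := by
    have := (lt_div_iff₀ (by positivity)).mp hs
    nlinarith [abs_nonneg s]
  have hs1 := neg_abs_le s
  have hs2 := le_abs_self s
  rcases le_or_gt 0 s with h | h
  · nlinarith [mul_nonneg h hta0, abs_of_nonneg h]
  · have habs : |s| = -s := abs_of_neg h
    nlinarith [mul_le_mul_of_nonpos_left htaC h.le]


lemma aux_bound {M C' a b d e ta tb td te s : ℝ} (hM : 0 ≤ M) (hC : 0 ≤ C')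
    (ha : 0 ≤ a) (hb : |b| ≤ M * a) (hd : |d| ≤ M * a) (he : |e| ≤ M ^ 2 * a)
    (hta0 : 0 ≤ ta) (htaC : ta ≤ C' * a) (htb : |tb| ≤ C' * M * a) (htd : |td| ≤ C' * M * a)
    (hte : |te| ≤ C' * M ^ 2 * a) (hs : |s| < 1 / (2 * (C' + 1))) :
    |(te - e) - (((tb - b) * ((1 - s) * d + s * td) + ((1 - s) * b + s * tb) * (td - d)) *
        ((1 - s) * a + s * ta) -
        ((1 - s) * b + s * tb) * ((1 - s) * d + s * td) * (ta - a)) / ((1 - s) * a + s * ta) ^ 2|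
      ≤ 49 * (C' + 1) * M ^ 2 * a := by
  have hC1 : (0:ℝ) < C' + 1 := by linarith
  rcases ha.eq_or_lt with h0 | hapos
  · have hb0 : b = 0 := abs_nonpos_iff.mp (by rw [← h0] at hb; simpa using hb)
    have hd0 : d = 0 := abs_nonpos_iff.mp (by rw [← h0] at hd; simpa using hd)
    have he0 : e = 0 := abs_nonpos_iff.mp (by rw [← h0] at he; simpa using he)
    have hta' : ta = 0 := le_antisymm (by rw [← h0] at htaC; simpa using htaC) hta0
    have htb0 : tb = 0 := abs_nonpos_iff.mp (by rw [← h0] at htb; simpa using htb)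
    have htd0 : td = 0 := abs_nonpos_iff.mp (by rw [← h0] at htd; simpa using htd)
    have hte0 : te = 0 := abs_nonpos_iff.mp (by rw [← h0] at hte; simpa using hte)
    simp [hb0, hd0, he0, hta', htb0, htd0, hte0, ← h0]
  · have hs2 : |s| * (C' + 1) ≤ 1 / 2 := by
      have := (lt_div_iff₀ (by positivity)).mp hs
      nlinarith [abs_nonneg s]
    have hshalf : |s| ≤ 1 / 2 := by nlinarith [abs_nonneg s, mul_le_mul_of_nonneg_left hC (abs_nonneg s)]
    have h1s : |1 - s| ≤ 1 + |s| := by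
      calc |1 - s| ≤ |(1:ℝ)| + |s| := abs_sub _ _
        _ = 1 + |s| := by norm_num
    have hMa : 0 ≤ M * a := by positivity
    -- bounds on mixed quantities
    have hBT : |(1 - s) * b + s * tb| ≤ 2 * M * a := by
      calc |(1 - s) * b + s * tb| ≤ |(1 - s) * b| + |s * tb| := abs_add_le _ _
        _ = |1 - s| * |b| + |s| * |tb| := by rw [abs_mul, abs_mul]
        _ ≤ (1 + |s|) * (M * a) + |s| * (C' * M * a) :=
            add_le_add (mul_le_mul h1s hb (abs_nonneg _) (by positivity))
              (mul_le_mul_of_nonneg_left htb (abs_nonneg _))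
        _ ≤ 2 * M * a := by nlinarith [abs_nonneg s, hs2, hshalf]
    have hDT : |(1 - s) * d + s * td| ≤ 2 * M * a := by
      calc |(1 - s) * d + s * td| ≤ |(1 - s) * d| + |s * td| := abs_add_le _ _
        _ = |1 - s| * |d| + |s| * |td| := by rw [abs_mul, abs_mul]
        _ ≤ (1 + |s|) * (M * a) + |s| * (C' * M * a) :=
            add_le_add (mul_le_mul h1s hd (abs_nonneg _) (by positivity))
              (mul_le_mul_of_nonneg_left htd (abs_nonneg _))
        _ ≤ 2 * M * a := by nlinarith [abs_nonneg s, hs2, hshalf]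
    have hFub : |(1 - s) * a + s * ta| ≤ 2 * a := by
      have hta' : |ta| ≤ C' * a := by rw [abs_of_nonneg hta0]; exact htaC
      calc |(1 - s) * a + s * ta| ≤ |(1 - s) * a| + |s * ta| := abs_add_le _ _
        _ = |1 - s| * |a| + |s| * |ta| := by rw [abs_mul, abs_mul]
        _ ≤ (1 + |s|) * a + |s| * (C' * a) := by
            rw [abs_of_nonneg ha]
            exact add_le_add (mul_le_mul_of_nonneg_right h1s ha) (mul_le_mul_of_nonneg_left hta' (abs_nonneg _))
        _ ≤ 2 * a := by nlinarith [abs_nonneg s, hs2, hshalf]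
    have hF : a / 2 ≤ (1 - s) * a + s * ta := aux_pos hC hapos hta0 htaC hs
    have hFpos : 0 < (1 - s) * a + s * ta := lt_of_lt_of_le (by positivity) hF
    have hF2 : a ^ 2 / 4 ≤ ((1 - s) * a + s * ta) ^ 2 := by nlinarith
    have htbb : |tb - b| ≤ (C' + 1) * M * a := by
      calc |tb - b| ≤ |tb| + |b| := abs_sub _ _
        _ ≤ C' * M * a + M * a := add_le_add htb hb
        _ = (C' + 1) * M * a := by ring
    have htdd : |td - d| ≤ (C' + 1) * M * a := by
      calc |td - d| ≤ |td| + |d| := abs_sub _ _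
        _ ≤ C' * M * a + M * a := add_le_add htd hd
        _ = (C' + 1) * M * a := by ring
    have htaa : |ta - a| ≤ (C' + 1) * a := by
      calc |ta - a| ≤ |ta| + |a| := abs_sub _ _
        _ ≤ C' * a + a := add_le_add (by rw [abs_of_nonneg hta0]; exact htaC) (by rw [abs_of_nonneg ha])
        _ = (C' + 1) * a := by ring
    have htee : |te - e| ≤ (C' + 1) * M ^ 2 * a := by
      calc |te - e| ≤ |te| + |e| := abs_sub _ _
        _ ≤ C' * M ^ 2 * a + M ^ 2 * a := add_le_add hte he
        _ = (C' + 1) * M ^ 2 * a := by ring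
    have t1 : |tb - b| * |(1 - s) * d + s * td| ≤ ((C' + 1) * M * a) * (2 * M * a) :=
      mul_le_mul htbb hDT (abs_nonneg _) (by positivity)
    have t2 : |(1 - s) * b + s * tb| * |td - d| ≤ (2 * M * a) * ((C' + 1) * M * a) :=
      mul_le_mul hBT htdd (abs_nonneg _) (by positivity)
    have t4 : |(1 - s) * b + s * tb| * |(1 - s) * d + s * td| * |ta - a| ≤
        (2 * M * a) * (2 * M * a) * ((C' + 1) * a) :=
      mul_le_mul (mul_le_mul hBT hDT (abs_nonneg _) (by positivity)) htaa (abs_nonneg _) (by positivity)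
    have hN : |((tb - b) * ((1 - s) * d + s * td) + ((1 - s) * b + s * tb) * (td - d)) *
        ((1 - s) * a + s * ta) -
        ((1 - s) * b + s * tb) * ((1 - s) * d + s * td) * (ta - a)| ≤ 12 * (C' + 1) * M ^ 2 * a ^ 3 := by
      calc |((tb - b) * ((1 - s) * d + s * td) + ((1 - s) * b + s * tb) * (td - d)) *
              ((1 - s) * a + s * ta) -
              ((1 - s) * b + s * tb) * ((1 - s) * d + s * td) * (ta - a)|
          ≤ |((tb - b) * ((1 - s) * d + s * td) + ((1 - s) * b + s * tb) * (td - d)) *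
              ((1 - s) * a + s * ta)| +
              |((1 - s) * b + s * tb) * ((1 - s) * d + s * td) * (ta - a)| := abs_sub _ _
        _ = |(tb - b) * ((1 - s) * d + s * td) + ((1 - s) * b + s * tb) * (td - d)| *
              |(1 - s) * a + s * ta| +
              |(1 - s) * b + s * tb| * |(1 - s) * d + s * td| * |ta - a| := by
            rw [abs_mul, abs_mul, abs_mul]
        _ ≤ (|(tb - b)| * |(1 - s) * d + s * td| + |(1 - s) * b + s * tb| * |td - d|) *
              |(1 - s) * a + s * ta| +
              |(1 - s) * b + s * tb| * |(1 - s) * d + s * td| * |ta - a| := by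
            have := (abs_add_le ((tb - b) * ((1 - s) * d + s * td)) (((1 - s) * b + s * tb) * (td - d)))
            rw [abs_mul, abs_mul] at this
            exact add_le_add_left (mul_le_mul_of_nonneg_right this (abs_nonneg _)) _
        _ ≤ (((C' + 1) * M * a) * (2 * M * a) + (2 * M * a) * ((C' + 1) * M * a)) * (2 * a) +
              (2 * M * a) * (2 * M * a) * ((C' + 1) * a) := by
            refine add_le_add (mul_le_mul (add_le_add t1 t2) hFub (abs_nonneg _) (by positivity)) t4
        _ ≤ 12 * (C' + 1) * M ^ 2 * a ^ 3 := le_of_eq (by ring)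
    have hdivb : |((tb - b) * ((1 - s) * d + s * td) + ((1 - s) * b + s * tb) * (td - d)) *
        ((1 - s) * a + s * ta) -
        ((1 - s) * b + s * tb) * ((1 - s) * d + s * td) * (ta - a)| / ((1 - s) * a + s * ta) ^ 2 ≤
        48 * (C' + 1) * M ^ 2 * a := by
      have step : |((tb - b) * ((1 - s) * d + s * td) + ((1 - s) * b + s * tb) * (td - d)) *
          ((1 - s) * a + s * ta) -
          ((1 - s) * b + s * tb) * ((1 - s) * d + s * td) * (ta - a)| / ((1 - s) * a + s * ta) ^ 2 ≤
          (12 * (C' + 1) * M ^ 2 * a ^ 3) / (a ^ 2 / 4) :=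
        div_le_div₀ (by positivity) hN (by positivity) hF2
      have eq : (12 * (C' + 1) * M ^ 2 * a ^ 3) / (a ^ 2 / 4) = 48 * (C' + 1) * M ^ 2 * a := by
        field_simp
        ring
      rw [eq] at step
      exact step
    calc |(te - e) - (((tb - b) * ((1 - s) * d + s * td) + ((1 - s) * b + s * tb) * (td - d)) *
            ((1 - s) * a + s * ta) -
            ((1 - s) * b + s * tb) * ((1 - s) * d + s * td) * (ta - a)) / ((1 - s) * a + s * ta) ^ 2|
        ≤ |te - e| + |(((tb - b) * ((1 - s) * d + s * td) + ((1 - s) * b + s * tb) * (td - d)) *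
            ((1 - s) * a + s * ta) -
            ((1 - s) * b + s * tb) * ((1 - s) * d + s * td) * (ta - a)) / ((1 - s) * a + s * ta) ^ 2| :=
          abs_sub _ _
      _ = |te - e| + |((tb - b) * ((1 - s) * d + s * td) + ((1 - s) * b + s * tb) * (td - d)) *
            ((1 - s) * a + s * ta) -
            ((1 - s) * b + s * tb) * ((1 - s) * d + s * td) * (ta - a)| / ((1 - s) * a + s * ta) ^ 2 := by
          rw [abs_div, abs_pow, sq_abs]
      _ ≤ (C' + 1) * M ^ 2 * a + 48 * (C' + 1) * M ^ 2 * a := add_le_add htee hdivb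
      _ = 49 * (C' + 1) * M ^ 2 * a := by ring


lemma aux_G0 {M a b d e : ℝ} (hM : 0 ≤ M) (ha : 0 ≤ a) (hb : |b| ≤ M * a) (hd : |d| ≤ M * a)
    (he : |e| ≤ M ^ 2 * a) : |e - b * d / a| ≤ 2 * M ^ 2 * a := by
  rcases ha.eq_or_lt with h0 | hapos
  · have hb0 : b = 0 := abs_nonpos_iff.mp (by rw [← h0] at hb; simpa using hb)
    have he0 : e = 0 := abs_nonpos_iff.mp (by rw [← h0] at he; simpa using he)
    simp [hb0, he0, ← h0]
  · have hbd : |b| * |d| ≤ (M * a) * (M * a) := mul_le_mul hb hd (abs_nonneg _) (by positivity)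
    have heq : (M * a) * (M * a) / a = M ^ 2 * a := by field_simp
    calc |e - b * d / a| ≤ |e| + |b * d / a| := abs_sub _ _
      _ = |e| + |b| * |d| / a := by rw [abs_div, abs_mul, abs_of_pos hapos]
      _ ≤ M ^ 2 * a + (M * a) * (M * a) / a := by
          exact add_le_add he ((div_le_div_iff_of_pos_right hapos).mpr hbd)
      _ = 2 * M ^ 2 * a := by rw [heq]; ring

noncomputable def eqv (Z : Type*) [MeasurableSpace Z] : (ℝ × ℝ × Z) ≃ᵐ (Z × ℝ × ℝ) :=
  (MeasurableEquiv.prodComm : (ℝ × ℝ × Z) ≃ᵐ (ℝ × Z) × ℝ).trans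
    (((MeasurableEquiv.prodComm : (ℝ × Z) ≃ᵐ Z × ℝ).prodCongr (MeasurableEquiv.refl ℝ)).trans
      MeasurableEquiv.prodAssoc)

end S8

open S8 in
/-- Pathwise differentiability of the expected conditional covariance
`Ψ(P) = E_P[(Y − E_P(Y|Z))(X − E_P(X|Z))]`. With densities `f`, `f̃` of `P`, `P̃` w.r.t.
`μ_Y ⊗ μ_X ⊗ ν`, boundedness of `y` and `x` on the support of `f`, and domination
`f̃ ≤ C·f`, the map `t ↦ Ψ(P_t)` along the mixture `f_t = (1−t)f + t·f̃` has a right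
derivative at `t = 0` equal to `∫ [(y − m₀(z))(x − π₀(z)) − Ψ(0)] dP̃`. -/
theorem stmt_8 {Z : Type*} [MeasurableSpace Z] (ν : Measure Z) [SigmaFinite ν]
    (μY μX : Measure ℝ) [SigmaFinite μY] [SigmaFinite μX]
    (f ftil : ℝ → ℝ → Z → ℝ)
    (hf_meas : Measurable fun p : ℝ × ℝ × Z => f p.1 p.2.1 p.2.2)
    (hft_meas : Measurable fun p : ℝ × ℝ × Z => ftil p.1 p.2.1 p.2.2)
    (hf_nn : ∀ y x z, 0 ≤ f y x z) (hft_nn : ∀ y x z, 0 ≤ ftil y x z)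
    (hf_one : ∫ p, f p.1 p.2.1 p.2.2 ∂(μY.prod (μX.prod ν)) = 1)
    (hft_one : ∫ p, ftil p.1 p.2.1 p.2.2 ∂(μY.prod (μX.prod ν)) = 1)
    (M C : ℝ)
    (hbdd : ∀ᵐ p ∂(μY.prod (μX.prod ν)),
      0 < f p.1 p.2.1 p.2.2 → |p.1| ≤ M ∧ |p.2.1| ≤ M)
    (hdom : ∀ᵐ p ∂(μY.prod (μX.prod ν)),
      ftil p.1 p.2.1 p.2.2 ≤ C * f p.1 p.2.1 p.2.2) :
    let ft : ℝ → ℝ → ℝ → Z → ℝ := fun t y x z => (1 - t) * f y x z + t * ftil y x z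
    let fz : ℝ → Z → ℝ := fun t z => ∫ x, ∫ y, ft t y x z ∂μY ∂μX
    let m : ℝ → Z → ℝ := fun t z => (∫ x, ∫ y, y * ft t y x z ∂μY ∂μX) / fz t z
    let piZ : ℝ → Z → ℝ := fun t z => (∫ x, ∫ y, x * ft t y x z ∂μY ∂μX) / fz t z
    let Ψ : ℝ → ℝ := fun t =>
      ∫ z, ∫ x, ∫ y, (y - m t z) * (x - piZ t z) * ft t y x z ∂μY ∂μX ∂ν
    HasDerivWithinAt Ψ
      (∫ z, ∫ x, ∫ y,
        ((y - m 0 z) * (x - piZ 0 z) - Ψ 0) * ftil y x z ∂μY ∂μX ∂ν)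
      (Ici 0) 0 := by
  intro ft fz m piZ Ψ
  have hCnn : (0:ℝ) ≤ max C 0 := le_max_right _ _
  set C' : ℝ := max C 0 with hC'def
  set δ : ℝ := 1 / (2 * (C' + 1)) with hδdef
  have hδpos : 0 < δ := by rw [hδdef]; positivity
  -- the measure-preserving reordering
  have he : MeasurePreserving (eqv Z) (μY.prod (μX.prod ν)) (ν.prod (μX.prod μY)) := by
    have h1 := Measure.measurePreserving_swap (μ := μY) (ν := μX.prod ν)
    have h2 := (Measure.measurePreserving_swap (μ := μX) (ν := ν)).prod (MeasurePreserving.id μY)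
    have h3 := measurePreserving_prodAssoc ν μX μY
    exact h3.comp (h2.comp h1)
  -- integrability of the densities
  have hf_int : Integrable (fun p : ℝ × ℝ × Z => f p.1 p.2.1 p.2.2) (μY.prod (μX.prod ν)) := by
    by_contra hcon
    rw [integral_undef hcon] at hf_one; norm_num at hf_one
  have hft_int : Integrable (fun p : ℝ × ℝ × Z => ftil p.1 p.2.1 p.2.2) (μY.prod (μX.prod ν)) := by
    by_contra hcon
    rw [integral_undef hcon] at hft_one; norm_num at hft_one
  -- transfer to the reordered product measure
  have hFint : Integrable (fun q : Z × ℝ × ℝ => f q.2.2 q.2.1 q.1) (ν.prod (μX.prod μY)) := by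
    rw [← he.map_eq]
    exact (integrable_map_equiv (eqv Z) _).2 hf_int
  have hTint : Integrable (fun q : Z × ℝ × ℝ => ftil q.2.2 q.2.1 q.1) (ν.prod (μX.prod μY)) := by
    rw [← he.map_eq]
    exact (integrable_map_equiv (eqv Z) _).2 hft_int
  have hF1 : ∫ q : Z × ℝ × ℝ, f q.2.2 q.2.1 q.1 ∂(ν.prod (μX.prod μY)) = 1 :=
    (he.integral_comp' (fun q : Z × ℝ × ℝ => f q.2.2 q.2.1 q.1)).symm.trans hf_one
  have hT1 : ∫ q : Z × ℝ × ℝ, ftil q.2.2 q.2.1 q.1 ∂(ν.prod (μX.prod μY)) = 1 :=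
    (he.integral_comp' (fun q : Z × ℝ × ℝ => ftil q.2.2 q.2.1 q.1)).symm.trans hft_one
  have hbddρ : ∀ᵐ q ∂(ν.prod (μX.prod μY)),
      (0 < f q.2.2 q.2.1 q.1 → |q.2.2| ≤ M ∧ |q.2.1| ≤ M) :=
    (he.symm (eqv Z)).quasiMeasurePreserving.ae hbdd
  have hdomρ : ∀ᵐ q ∂(ν.prod (μX.prod μY)),
      ftil q.2.2 q.2.1 q.1 ≤ C * f q.2.2 q.2.1 q.1 :=
    (he.symm (eqv Z)).quasiMeasurePreserving.ae hdom
  have hdomρ' : ∀ᵐ q ∂(ν.prod (μX.prod μY)),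
      ftil q.2.2 q.2.1 q.1 ≤ C' * f q.2.2 q.2.1 q.1 := by
    filter_upwards [hdomρ] with q hq
    refine hq.trans (mul_le_mul_of_nonneg_right ?_ (hf_nn _ _ _))
    rw [hC'def]; exact le_max_left C 0
  -- M is nonnegative
  have hM0 : 0 ≤ M := by
    by_contra hM
    push_neg at hM
    have hz0 : ∀ᵐ q ∂(ν.prod (μX.prod μY)), f q.2.2 q.2.1 q.1 = 0 := by
      filter_upwards [hbddρ] with q hq
      by_contra hne
      have hpos : 0 < f q.2.2 q.2.1 q.1 := lt_of_le_of_ne (hf_nn _ _ _) (Ne.symm hne)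
      linarith [(hq hpos).1, abs_nonneg q.2.2]
    have h0 : ∫ q : Z × ℝ × ℝ, f q.2.2 q.2.1 q.1 ∂(ν.prod (μX.prod μY)) = 0 := by
      rw [integral_congr_ae hz0, integral_zero]
    rw [hF1] at h0; norm_num at h0
  -- measurability on the reordered space
  have mproj : Measurable (fun q : Z × ℝ × ℝ => ((q.2.2, q.2.1, q.1) : ℝ × ℝ × Z)) :=
    (measurable_snd.snd).prodMk ((measurable_snd.fst).prodMk measurable_fst)
  have mF : Measurable (fun q : Z × ℝ × ℝ => f q.2.2 q.2.1 q.1) := hf_meas.comp mproj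
  have mT : Measurable (fun q : Z × ℝ × ℝ => ftil q.2.2 q.2.1 q.1) := hft_meas.comp mproj
  have mFy : Measurable (fun q : Z × ℝ × ℝ => q.2.2 * f q.2.2 q.2.1 q.1) :=
    measurable_snd.snd.mul mF
  have mFx : Measurable (fun q : Z × ℝ × ℝ => q.2.1 * f q.2.2 q.2.1 q.1) :=
    measurable_snd.fst.mul mF
  have mFxy : Measurable (fun q : Z × ℝ × ℝ => q.2.2 * q.2.1 * f q.2.2 q.2.1 q.1) :=
    (measurable_snd.snd.mul measurable_snd.fst).mul mF
  have mTy : Measurable (fun q : Z × ℝ × ℝ => q.2.2 * ftil q.2.2 q.2.1 q.1) :=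
    measurable_snd.snd.mul mT
  have mTx : Measurable (fun q : Z × ℝ × ℝ => q.2.1 * ftil q.2.2 q.2.1 q.1) :=
    measurable_snd.fst.mul mT
  have mTxy : Measurable (fun q : Z × ℝ × ℝ => q.2.2 * q.2.1 * ftil q.2.2 q.2.1 q.1) :=
    (measurable_snd.snd.mul measurable_snd.fst).mul mT
  -- the global pointwise bounds
  have hbig : ∀ᵐ q ∂(ν.prod (μX.prod μY)),
      |q.2.2 * f q.2.2 q.2.1 q.1| ≤ M * f q.2.2 q.2.1 q.1 ∧
      |q.2.1 * f q.2.2 q.2.1 q.1| ≤ M * f q.2.2 q.2.1 q.1 ∧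
      |q.2.2 * q.2.1 * f q.2.2 q.2.1 q.1| ≤ M ^ 2 * f q.2.2 q.2.1 q.1 ∧
      |ftil q.2.2 q.2.1 q.1| ≤ C' * f q.2.2 q.2.1 q.1 ∧
      |q.2.2 * ftil q.2.2 q.2.1 q.1| ≤ C' * M * f q.2.2 q.2.1 q.1 ∧
      |q.2.1 * ftil q.2.2 q.2.1 q.1| ≤ C' * M * f q.2.2 q.2.1 q.1 ∧
      |q.2.2 * q.2.1 * ftil q.2.2 q.2.1 q.1| ≤ C' * M ^ 2 * f q.2.2 q.2.1 q.1 := by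
    filter_upwards [hbddρ, hdomρ'] with q h1 h2
    exact S8.bnds (hf_nn _ _ _) (hft_nn _ _ _) hM0 hCnn h1 h2
  -- integrability of the eight weighted densities on the reordered product
  have iFy : Integrable (fun q : Z × ℝ × ℝ => q.2.2 * f q.2.2 q.2.1 q.1) (ν.prod (μX.prod μY)) := by
    refine (hFint.const_mul M).mono' mFy.aestronglyMeasurable ?_
    filter_upwards [hbig] with q hq
    simpa only [Real.norm_eq_abs] using hq.1
  have iFx : Integrable (fun q : Z × ℝ × ℝ => q.2.1 * f q.2.2 q.2.1 q.1) (ν.prod (μX.prod μY)) := by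
    refine (hFint.const_mul M).mono' mFx.aestronglyMeasurable ?_
    filter_upwards [hbig] with q hq
    simpa only [Real.norm_eq_abs] using hq.2.1
  have iFxy : Integrable (fun q : Z × ℝ × ℝ => q.2.2 * q.2.1 * f q.2.2 q.2.1 q.1)
      (ν.prod (μX.prod μY)) := by
    refine (hFint.const_mul (M ^ 2)).mono' mFxy.aestronglyMeasurable ?_
    filter_upwards [hbig] with q hq
    simpa only [Real.norm_eq_abs] using hq.2.2.1
  have iTy : Integrable (fun q : Z × ℝ × ℝ => q.2.2 * ftil q.2.2 q.2.1 q.1)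
      (ν.prod (μX.prod μY)) := by
    refine (hFint.const_mul (C' * M)).mono' mTy.aestronglyMeasurable ?_
    filter_upwards [hbig] with q hq
    simpa only [Real.norm_eq_abs] using hq.2.2.2.2.1
  have iTx : Integrable (fun q : Z × ℝ × ℝ => q.2.1 * ftil q.2.2 q.2.1 q.1)
      (ν.prod (μX.prod μY)) := by
    refine (hFint.const_mul (C' * M)).mono' mTx.aestronglyMeasurable ?_
    filter_upwards [hbig] with q hq
    simpa only [Real.norm_eq_abs] using hq.2.2.2.2.2.1
  have iTxy : Integrable (fun q : Z × ℝ × ℝ => q.2.2 * q.2.1 * ftil q.2.2 q.2.1 q.1)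
      (ν.prod (μX.prod μY)) := by
    refine (hFint.const_mul (C' * M ^ 2)).mono' mTxy.aestronglyMeasurable ?_
    filter_upwards [hbig] with q hq
    simpa only [Real.norm_eq_abs] using hq.2.2.2.2.2.2
  -- z-level measurability and integrability
  have mI2f : Measurable (I2 μX μY f) := (mF.stronglyMeasurable.integral_prod_right').measurable
  have mI2tf : Measurable (I2 μX μY ftil) := (mT.stronglyMeasurable.integral_prod_right').measurable
  have mI2fy : Measurable (I2 μX μY (wY f)) :=
    (mFy.stronglyMeasurable.integral_prod_right').measurable
  have mI2fx : Measurable (I2 μX μY (wX f)) :=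
    (mFx.stronglyMeasurable.integral_prod_right').measurable
  have mI2fxy : Measurable (I2 μX μY (wP f)) :=
    (mFxy.stronglyMeasurable.integral_prod_right').measurable
  have mI2ty : Measurable (I2 μX μY (wY ftil)) :=
    (mTy.stronglyMeasurable.integral_prod_right').measurable
  have mI2tx : Measurable (I2 μX μY (wX ftil)) :=
    (mTx.stronglyMeasurable.integral_prod_right').measurable
  have mI2txy : Measurable (I2 μX μY (wP ftil)) :=
    (mTxy.stronglyMeasurable.integral_prod_right').measurable
  have iI2f : Integrable (I2 μX μY f) ν := hFint.integral_prod_left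
  have iI2tf : Integrable (I2 μX μY ftil) ν := hTint.integral_prod_left
  have hI2f_one : ∫ z, I2 μX μY f z ∂ν = 1 :=
    (MeasureTheory.integral_prod (fun q : Z × ℝ × ℝ => f q.2.2 q.2.1 q.1) hFint).symm.trans hF1
  have hI2tf_one : ∫ z, I2 μX μY ftil z ∂ν = 1 :=
    (MeasureTheory.integral_prod (fun q : Z × ℝ × ℝ => ftil q.2.2 q.2.1 q.1) hTint).symm.trans hT1
  -- per-z facts
  have g1 := hFint.prod_right_ae
  have g2 := iFy.prod_right_ae
  have g3 := iFx.prod_right_ae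
  have g4 := iFxy.prod_right_ae
  have g5 := hTint.prod_right_ae
  have g6 := iTy.prod_right_ae
  have g7 := iTx.prod_right_ae
  have g8 := iTxy.prod_right_ae
  have g9 := Measure.ae_ae_of_ae_prod (hbddρ.and hdomρ')
  -- the main per-z lemma
  have aegood : ∀ᵐ z ∂ν,
      (∀ s : ℝ, |s| < δ →
        (∫ x, ∫ y, (y - m s z) * (x - piZ s z) * ft s y x z ∂μY ∂μX) = GG μX μY f ftil s z) ∧
      ((∫ x, ∫ y, ((y - m 0 z) * (x - piZ 0 z) - Ψ 0) * ftil y x z ∂μY ∂μX) =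
        GG' μX μY f ftil 0 z + GG μX μY f ftil 0 z - Ψ 0 * I2 μX μY ftil z) ∧
      (0 ≤ I2 μX μY f z ∧ |I2 μX μY (wY f) z| ≤ M * I2 μX μY f z ∧
        |I2 μX μY (wX f) z| ≤ M * I2 μX μY f z ∧
        |I2 μX μY (wP f) z| ≤ M ^ 2 * I2 μX μY f z ∧
        0 ≤ I2 μX μY ftil z ∧ I2 μX μY ftil z ≤ C' * I2 μX μY f z ∧
        |I2 μX μY (wY ftil) z| ≤ C' * M * I2 μX μY f z ∧
        |I2 μX μY (wX ftil) z| ≤ C' * M * I2 μX μY f z ∧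
        |I2 μX μY (wP ftil) z| ≤ C' * M ^ 2 * I2 μX μY f z) := by
    filter_upwards [g1, g2, g3, g4, g5, g6, g7, g8, g9] with z h1 h2 h3 h4 h5 h6 h7 h8 h9
    -- pointwise bounds on sections
    have h9' : ∀ᵐ w ∂(μX.prod μY),
        |w.2 * f w.2 w.1 z| ≤ M * f w.2 w.1 z ∧
        |w.1 * f w.2 w.1 z| ≤ M * f w.2 w.1 z ∧
        |w.2 * w.1 * f w.2 w.1 z| ≤ M ^ 2 * f w.2 w.1 z ∧
        |ftil w.2 w.1 z| ≤ C' * f w.2 w.1 z ∧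
        |w.2 * ftil w.2 w.1 z| ≤ C' * M * f w.2 w.1 z ∧
        |w.1 * ftil w.2 w.1 z| ≤ C' * M * f w.2 w.1 z ∧
        |w.2 * w.1 * ftil w.2 w.1 z| ≤ C' * M ^ 2 * f w.2 w.1 z := by
      filter_upwards [h9] with w hw
      exact S8.bnds (hf_nn _ _ _) (hft_nn _ _ _) hM0 hCnn hw.1 hw.2
    -- |∫| ≤ c ∫ helper
    have habs : ∀ (g F : ℝ × ℝ → ℝ) (c : ℝ), Integrable g (μX.prod μY) →
        Integrable F (μX.prod μY) → (∀ᵐ w ∂(μX.prod μY), |g w| ≤ c * F w) →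
        |∫ w, g w ∂(μX.prod μY)| ≤ c * ∫ w, F w ∂(μX.prod μY) := by
      intro g F c hg hF hbw
      calc |∫ w, g w ∂(μX.prod μY)| ≤ ∫ w, |g w| ∂(μX.prod μY) := by
            simpa only [Real.norm_eq_abs] using norm_integral_le_integral_norm g
        _ ≤ ∫ w, c * F w ∂(μX.prod μY) := integral_mono_ae hg.abs (hF.const_mul c) hbw
        _ = c * ∫ w, F w ∂(μX.prod μY) := integral_const_mul c F
    -- numeric facts
    have na : 0 ≤ I2 μX μY f z := integral_nonneg fun w => hf_nn _ _ _
    have nta0 : 0 ≤ I2 μX μY ftil z := integral_nonneg fun w => hft_nn _ _ _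
    have nb : |I2 μX μY (wY f) z| ≤ M * I2 μX μY f z :=
      habs _ _ M h2 h1 (h9'.mono fun w hw => hw.1)
    have nd : |I2 μX μY (wX f) z| ≤ M * I2 μX μY f z :=
      habs _ _ M h3 h1 (h9'.mono fun w hw => hw.2.1)
    have ne_ : |I2 μX μY (wP f) z| ≤ M ^ 2 * I2 μX μY f z :=
      habs _ _ (M ^ 2) h4 h1 (h9'.mono fun w hw => hw.2.2.1)
    have ntb : |I2 μX μY (wY ftil) z| ≤ C' * M * I2 μX μY f z :=
      habs _ _ (C' * M) h6 h1 (h9'.mono fun w hw => hw.2.2.2.2.1)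
    have ntd : |I2 μX μY (wX ftil) z| ≤ C' * M * I2 μX μY f z :=
      habs _ _ (C' * M) h7 h1 (h9'.mono fun w hw => hw.2.2.2.2.2.1)
    have nte : |I2 μX μY (wP ftil) z| ≤ C' * M ^ 2 * I2 μX μY f z :=
      habs _ _ (C' * M ^ 2) h8 h1 (h9'.mono fun w hw => hw.2.2.2.2.2.2)
    have ntaC : I2 μX μY ftil z ≤ C' * I2 μX μY f z := by
      have hmono := integral_mono_ae h5 (h1.const_mul C') (h9.mono fun w hw => hw.2)
      calc I2 μX μY ftil z ≤ ∫ w : ℝ × ℝ, C' * f w.2 w.1 z ∂(μX.prod μY) := hmono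
        _ = C' * I2 μX μY f z := integral_const_mul _ _
    -- splitting helper
    have hsplit : ∀ (g h : ℝ → ℝ → Z → ℝ) (s : ℝ),
        Integrable (fun w : ℝ × ℝ => g w.2 w.1 z) (μX.prod μY) →
        Integrable (fun w : ℝ × ℝ => h w.2 w.1 z) (μX.prod μY) →
        (∫ w : ℝ × ℝ, ((1 - s) * g w.2 w.1 z + s * h w.2 w.1 z) ∂(μX.prod μY)) =
          mI μX μY g h s z := by
      intro g h s hg hh
      calc (∫ w : ℝ × ℝ, ((1 - s) * g w.2 w.1 z + s * h w.2 w.1 z) ∂(μX.prod μY)) =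
          (∫ w : ℝ × ℝ, (1 - s) * g w.2 w.1 z ∂(μX.prod μY)) +
            ∫ w : ℝ × ℝ, s * h w.2 w.1 z ∂(μX.prod μY) :=
          integral_add (hg.const_mul _) (hh.const_mul _)
        _ = mI μX μY g h s z := by rw [integral_const_mul, integral_const_mul]; rfl
    -- mixture integrability
    have hftint : ∀ s : ℝ, Integrable (fun w : ℝ × ℝ => ft s w.2 w.1 z) (μX.prod μY) := by
      intro s
      have hre : (fun w : ℝ × ℝ => ft s w.2 w.1 z) =
          fun w => (1 - s) * f w.2 w.1 z + s * ftil w.2 w.1 z := rfl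
      rw [hre]
      exact (h1.const_mul _).add (h5.const_mul _)
    -- the three basic identities (for all s)
    have hfz : ∀ s : ℝ, fz s z = mI μX μY f ftil s z := by
      intro s
      have hip := MeasureTheory.integral_prod (fun w : ℝ × ℝ => ft s w.2 w.1 z) (hftint s)
      calc fz s z = ∫ w : ℝ × ℝ, ft s w.2 w.1 z ∂(μX.prod μY) := hip.symm
        _ = ∫ w : ℝ × ℝ, ((1 - s) * f w.2 w.1 z + s * ftil w.2 w.1 z) ∂(μX.prod μY) := rfl
        _ = mI μX μY f ftil s z := hsplit f ftil s h1 h5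
    have hBnum : ∀ s : ℝ, (∫ x, ∫ y, y * ft s y x z ∂μY ∂μX) =
        mI μX μY (wY f) (wY ftil) s z := by
      intro s
      have hexp : (fun w : ℝ × ℝ => w.2 * ft s w.2 w.1 z) =
          fun w => (1 - s) * (wY f) w.2 w.1 z + s * (wY ftil) w.2 w.1 z := by
        funext w
        show w.2 * ((1 - s) * f w.2 w.1 z + s * ftil w.2 w.1 z) =
          (1 - s) * (w.2 * f w.2 w.1 z) + s * (w.2 * ftil w.2 w.1 z)
        ring
      have hint : Integrable (fun w : ℝ × ℝ => w.2 * ft s w.2 w.1 z) (μX.prod μY) := by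
        rw [hexp]; exact (h2.const_mul _).add (h6.const_mul _)
      have hip := MeasureTheory.integral_prod (fun w : ℝ × ℝ => w.2 * ft s w.2 w.1 z) hint
      calc (∫ x, ∫ y, y * ft s y x z ∂μY ∂μX) =
          ∫ w : ℝ × ℝ, w.2 * ft s w.2 w.1 z ∂(μX.prod μY) := hip.symm
        _ = ∫ w : ℝ × ℝ, ((1 - s) * (wY f) w.2 w.1 z + s * (wY ftil) w.2 w.1 z) ∂(μX.prod μY) := by
            rw [hexp]
        _ = mI μX μY (wY f) (wY ftil) s z := hsplit (wY f) (wY ftil) s h2 h6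
    have hDnum : ∀ s : ℝ, (∫ x, ∫ y, x * ft s y x z ∂μY ∂μX) =
        mI μX μY (wX f) (wX ftil) s z := by
      intro s
      have hexp : (fun w : ℝ × ℝ => w.1 * ft s w.2 w.1 z) =
          fun w => (1 - s) * (wX f) w.2 w.1 z + s * (wX ftil) w.2 w.1 z := by
        funext w
        show w.1 * ((1 - s) * f w.2 w.1 z + s * ftil w.2 w.1 z) =
          (1 - s) * (w.1 * f w.2 w.1 z) + s * (w.1 * ftil w.2 w.1 z)
        ring
      have hint : Integrable (fun w : ℝ × ℝ => w.1 * ft s w.2 w.1 z) (μX.prod μY) := by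
        rw [hexp]; exact (h3.const_mul _).add (h7.const_mul _)
      have hip := MeasureTheory.integral_prod (fun w : ℝ × ℝ => w.1 * ft s w.2 w.1 z) hint
      calc (∫ x, ∫ y, x * ft s y x z ∂μY ∂μX) =
          ∫ w : ℝ × ℝ, w.1 * ft s w.2 w.1 z ∂(μX.prod μY) := hip.symm
        _ = ∫ w : ℝ × ℝ, ((1 - s) * (wX f) w.2 w.1 z + s * (wX ftil) w.2 w.1 z) ∂(μX.prod μY) := by
            rw [hexp]
        _ = mI μX μY (wX f) (wX ftil) s z := hsplit (wX f) (wX ftil) s h3 h7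
    have hm : ∀ s : ℝ, m s z = mI μX μY (wY f) (wY ftil) s z / mI μX μY f ftil s z := by
      intro s
      show (∫ x, ∫ y, y * ft s y x z ∂μY ∂μX) / fz s z = _
      rw [hBnum s, hfz s]
    have hp : ∀ s : ℝ, piZ s z = mI μX μY (wX f) (wX ftil) s z / mI μX μY f ftil s z := by
      intro s
      show (∫ x, ∫ y, x * ft s y x z ∂μY ∂μX) / fz s z = _
      rw [hDnum s, hfz s]
    -- first component
    have comp1 : ∀ s : ℝ, |s| < δ →
        (∫ x, ∫ y, (y - m s z) * (x - piZ s z) * ft s y x z ∂μY ∂μX) =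
          GG μX μY f ftil s z := by
      intro s hs
      have hexp2 : (fun w : ℝ × ℝ => (w.2 - m s z) * (w.1 - piZ s z) * ft s w.2 w.1 z) =
          fun w => ((1 - s) * (wP f) w.2 w.1 z + s * (wP ftil) w.2 w.1 z)
            - m s z * ((1 - s) * (wX f) w.2 w.1 z + s * (wX ftil) w.2 w.1 z)
            - piZ s z * ((1 - s) * (wY f) w.2 w.1 z + s * (wY ftil) w.2 w.1 z)
            + m s z * piZ s z * ((1 - s) * f w.2 w.1 z + s * ftil w.2 w.1 z) := by
        funext w
        show (w.2 - m s z) * (w.1 - piZ s z) * ((1 - s) * f w.2 w.1 z + s * ftil w.2 w.1 z) =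
          ((1 - s) * (w.2 * w.1 * f w.2 w.1 z) + s * (w.2 * w.1 * ftil w.2 w.1 z))
            - m s z * ((1 - s) * (w.1 * f w.2 w.1 z) + s * (w.1 * ftil w.2 w.1 z))
            - piZ s z * ((1 - s) * (w.2 * f w.2 w.1 z) + s * (w.2 * ftil w.2 w.1 z))
            + m s z * piZ s z * ((1 - s) * f w.2 w.1 z + s * ftil w.2 w.1 z)
        ring
      have iA : Integrable
          (fun w : ℝ × ℝ => (1 - s) * (wP f) w.2 w.1 z + s * (wP ftil) w.2 w.1 z)
          (μX.prod μY) := (h4.const_mul _).add (h8.const_mul _)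
      have iB : Integrable (fun w : ℝ × ℝ =>
          m s z * ((1 - s) * (wX f) w.2 w.1 z + s * (wX ftil) w.2 w.1 z)) (μX.prod μY) :=
        ((h3.const_mul _).add (h7.const_mul _)).const_mul _
      have iC : Integrable (fun w : ℝ × ℝ =>
          piZ s z * ((1 - s) * (wY f) w.2 w.1 z + s * (wY ftil) w.2 w.1 z)) (μX.prod μY) :=
        ((h2.const_mul _).add (h6.const_mul _)).const_mul _
      have iD : Integrable (fun w : ℝ × ℝ =>
          m s z * piZ s z * ((1 - s) * f w.2 w.1 z + s * ftil w.2 w.1 z)) (μX.prod μY) :=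
        ((h1.const_mul _).add (h5.const_mul _)).const_mul _
      have hint : Integrable
          (fun w : ℝ × ℝ => (w.2 - m s z) * (w.1 - piZ s z) * ft s w.2 w.1 z) (μX.prod μY) := by
        rw [hexp2]; exact ((iA.sub iB).sub iC).add iD
      have hip := MeasureTheory.integral_prod
        (fun w : ℝ × ℝ => (w.2 - m s z) * (w.1 - piZ s z) * ft s w.2 w.1 z) hint
      have s1 : (∫ w : ℝ × ℝ, (((1 - s) * (wP f) w.2 w.1 z + s * (wP ftil) w.2 w.1 z)
            - m s z * ((1 - s) * (wX f) w.2 w.1 z + s * (wX ftil) w.2 w.1 z)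
            - piZ s z * ((1 - s) * (wY f) w.2 w.1 z + s * (wY ftil) w.2 w.1 z)
            + m s z * piZ s z * ((1 - s) * f w.2 w.1 z + s * ftil w.2 w.1 z)) ∂(μX.prod μY)) =
          (∫ w : ℝ × ℝ, (((1 - s) * (wP f) w.2 w.1 z + s * (wP ftil) w.2 w.1 z)
            - m s z * ((1 - s) * (wX f) w.2 w.1 z + s * (wX ftil) w.2 w.1 z)
            - piZ s z * ((1 - s) * (wY f) w.2 w.1 z + s * (wY ftil) w.2 w.1 z)) ∂(μX.prod μY)) +
          ∫ w : ℝ × ℝ, m s z * piZ s z * ((1 - s) * f w.2 w.1 z + s * ftil w.2 w.1 z)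
            ∂(μX.prod μY) := integral_add ((iA.sub iB).sub iC) iD
      have s2 : (∫ w : ℝ × ℝ, (((1 - s) * (wP f) w.2 w.1 z + s * (wP ftil) w.2 w.1 z)
            - m s z * ((1 - s) * (wX f) w.2 w.1 z + s * (wX ftil) w.2 w.1 z)
            - piZ s z * ((1 - s) * (wY f) w.2 w.1 z + s * (wY ftil) w.2 w.1 z)) ∂(μX.prod μY)) =
          (∫ w : ℝ × ℝ, (((1 - s) * (wP f) w.2 w.1 z + s * (wP ftil) w.2 w.1 z)
            - m s z * ((1 - s) * (wX f) w.2 w.1 z + s * (wX ftil) w.2 w.1 z)) ∂(μX.prod μY)) -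
          ∫ w : ℝ × ℝ, piZ s z * ((1 - s) * (wY f) w.2 w.1 z + s * (wY ftil) w.2 w.1 z)
            ∂(μX.prod μY) := integral_sub (iA.sub iB) iC
      have s3 : (∫ w : ℝ × ℝ, (((1 - s) * (wP f) w.2 w.1 z + s * (wP ftil) w.2 w.1 z)
            - m s z * ((1 - s) * (wX f) w.2 w.1 z + s * (wX ftil) w.2 w.1 z)) ∂(μX.prod μY)) =
          (∫ w : ℝ × ℝ, ((1 - s) * (wP f) w.2 w.1 z + s * (wP ftil) w.2 w.1 z) ∂(μX.prod μY)) -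
          ∫ w : ℝ × ℝ, m s z * ((1 - s) * (wX f) w.2 w.1 z + s * (wX ftil) w.2 w.1 z)
            ∂(μX.prod μY) := integral_sub iA iB
      calc (∫ x, ∫ y, (y - m s z) * (x - piZ s z) * ft s y x z ∂μY ∂μX) =
          ∫ w : ℝ × ℝ, (w.2 - m s z) * (w.1 - piZ s z) * ft s w.2 w.1 z ∂(μX.prod μY) := hip.symm
        _ = mI μX μY (wP f) (wP ftil) s z - m s z * mI μX μY (wX f) (wX ftil) s z
            - piZ s z * mI μX μY (wY f) (wY ftil) s z
            + m s z * piZ s z * mI μX μY f ftil s z := by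
            rw [hexp2, s1, s2, s3, integral_const_mul, integral_const_mul, integral_const_mul,
              hsplit (wP f) (wP ftil) s h4 h8, hsplit (wX f) (wX ftil) s h3 h7,
              hsplit (wY f) (wY ftil) s h2 h6, hsplit f ftil s h1 h5]
        _ = GG μX μY f ftil s z := by
            rw [hm s, hp s]
            rcases na.eq_or_lt with h0 | hapos
            · have hb0 : I2 μX μY (wY f) z = 0 :=
                abs_nonpos_iff.mp (by rw [← h0] at nb; simpa using nb)
              have hd0 : I2 μX μY (wX f) z = 0 :=
                abs_nonpos_iff.mp (by rw [← h0] at nd; simpa using nd)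
              have htb0 : I2 μX μY (wY ftil) z = 0 :=
                abs_nonpos_iff.mp (by rw [← h0] at ntb; simpa using ntb)
              have htd0 : I2 μX μY (wX ftil) z = 0 :=
                abs_nonpos_iff.mp (by rw [← h0] at ntd; simpa using ntd)
              unfold S8.GG S8.mI
              rw [hb0, hd0, htb0, htd0]
              simp
            · have hposF : 0 < mI μX μY f ftil s z := by
                have haux := S8.aux_pos hCnn hapos nta0 ntaC (by rw [hδdef] at hs; exact hs)
                unfold S8.mI
                unfold S8.mI at haux
                linarith [half_pos hapos]
              have hFne : mI μX μY f ftil s z ≠ 0 := hposF.ne'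
              unfold S8.GG
              field_simp
              ring
    -- second component
    have comp2 : (∫ x, ∫ y, ((y - m 0 z) * (x - piZ 0 z) - Ψ 0) * ftil y x z ∂μY ∂μX) =
        GG' μX μY f ftil 0 z + GG μX μY f ftil 0 z - Ψ 0 * I2 μX μY ftil z := by
      have hexp3 : (fun w : ℝ × ℝ => ((w.2 - m 0 z) * (w.1 - piZ 0 z) - Ψ 0) * ftil w.2 w.1 z) =
          fun w => (w.2 * w.1 * ftil w.2 w.1 z) - m 0 z * (w.1 * ftil w.2 w.1 z)
            - piZ 0 z * (w.2 * ftil w.2 w.1 z) + (m 0 z * piZ 0 z - Ψ 0) * ftil w.2 w.1 z := by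
        funext w
        ring
      have hint3 : Integrable
          (fun w : ℝ × ℝ => ((w.2 - m 0 z) * (w.1 - piZ 0 z) - Ψ 0) * ftil w.2 w.1 z)
          (μX.prod μY) := by
        rw [hexp3]
        exact ((h8.sub (h7.const_mul _)).sub (h6.const_mul _)).add (h5.const_mul _)
      have hip := MeasureTheory.integral_prod
        (fun w : ℝ × ℝ => ((w.2 - m 0 z) * (w.1 - piZ 0 z) - Ψ 0) * ftil w.2 w.1 z) hint3
      have s1 : (∫ w : ℝ × ℝ, ((w.2 * w.1 * ftil w.2 w.1 z) - m 0 z * (w.1 * ftil w.2 w.1 z)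
            - piZ 0 z * (w.2 * ftil w.2 w.1 z)
            + (m 0 z * piZ 0 z - Ψ 0) * ftil w.2 w.1 z) ∂(μX.prod μY)) =
          (∫ w : ℝ × ℝ, ((w.2 * w.1 * ftil w.2 w.1 z) - m 0 z * (w.1 * ftil w.2 w.1 z)
            - piZ 0 z * (w.2 * ftil w.2 w.1 z)) ∂(μX.prod μY)) +
          ∫ w : ℝ × ℝ, (m 0 z * piZ 0 z - Ψ 0) * ftil w.2 w.1 z ∂(μX.prod μY) :=
        integral_add ((h8.sub (h7.const_mul _)).sub (h6.const_mul _)) (h5.const_mul _)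
      have s2 : (∫ w : ℝ × ℝ, ((w.2 * w.1 * ftil w.2 w.1 z) - m 0 z * (w.1 * ftil w.2 w.1 z)
            - piZ 0 z * (w.2 * ftil w.2 w.1 z)) ∂(μX.prod μY)) =
          (∫ w : ℝ × ℝ, ((w.2 * w.1 * ftil w.2 w.1 z) - m 0 z * (w.1 * ftil w.2 w.1 z))
            ∂(μX.prod μY)) -
          ∫ w : ℝ × ℝ, piZ 0 z * (w.2 * ftil w.2 w.1 z) ∂(μX.prod μY) :=
        integral_sub (h8.sub (h7.const_mul _)) (h6.const_mul _)
      have s3 : (∫ w : ℝ × ℝ, ((w.2 * w.1 * ftil w.2 w.1 z) - m 0 z * (w.1 * ftil w.2 w.1 z))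
            ∂(μX.prod μY)) =
          (∫ w : ℝ × ℝ, w.2 * w.1 * ftil w.2 w.1 z ∂(μX.prod μY)) -
          ∫ w : ℝ × ℝ, m 0 z * (w.1 * ftil w.2 w.1 z) ∂(μX.prod μY) :=
        integral_sub h8 (h7.const_mul _)
      have hval3 : (∫ x, ∫ y, ((y - m 0 z) * (x - piZ 0 z) - Ψ 0) * ftil y x z ∂μY ∂μX) =
          I2 μX μY (wP ftil) z - m 0 z * I2 μX μY (wX ftil) z
            - piZ 0 z * I2 μX μY (wY ftil) z
            + (m 0 z * piZ 0 z - Ψ 0) * I2 μX μY ftil z := by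
        calc (∫ x, ∫ y, ((y - m 0 z) * (x - piZ 0 z) - Ψ 0) * ftil y x z ∂μY ∂μX) =
            ∫ w : ℝ × ℝ, ((w.2 - m 0 z) * (w.1 - piZ 0 z) - Ψ 0) * ftil w.2 w.1 z
              ∂(μX.prod μY) := hip.symm
          _ = I2 μX μY (wP ftil) z - m 0 z * I2 μX μY (wX ftil) z
              - piZ 0 z * I2 μX μY (wY ftil) z
              + (m 0 z * piZ 0 z - Ψ 0) * I2 μX μY ftil z := by
              rw [hexp3, s1, s2, s3, integral_const_mul, integral_const_mul, integral_const_mul]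
              rfl
      rw [hval3, hm 0, hp 0]
      rcases na.eq_or_lt with h0 | hapos
      · have hb0 : I2 μX μY (wY f) z = 0 :=
          abs_nonpos_iff.mp (by rw [← h0] at nb; simpa using nb)
        have hd0 : I2 μX μY (wX f) z = 0 :=
          abs_nonpos_iff.mp (by rw [← h0] at nd; simpa using nd)
        have he0 : I2 μX μY (wP f) z = 0 :=
          abs_nonpos_iff.mp (by rw [← h0] at ne_; simpa using ne_)
        have hta' : I2 μX μY ftil z = 0 :=
          le_antisymm (by rw [← h0] at ntaC; simpa using ntaC) nta0
        have htb0 : I2 μX μY (wY ftil) z = 0 :=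
          abs_nonpos_iff.mp (by rw [← h0] at ntb; simpa using ntb)
        have htd0 : I2 μX μY (wX ftil) z = 0 :=
          abs_nonpos_iff.mp (by rw [← h0] at ntd; simpa using ntd)
        have hte0 : I2 μX μY (wP ftil) z = 0 :=
          abs_nonpos_iff.mp (by rw [← h0] at nte; simpa using nte)
        unfold S8.GG' S8.GG S8.mI
        rw [hb0, hd0, he0, hta', htb0, htd0, hte0, ← h0]
        simp
      · have hF0 : 0 < mI μX μY f ftil 0 z := by
          unfold S8.mI
          nlinarith [nta0]
        have hF0ne : mI μX μY f ftil 0 z ≠ 0 := hF0.ne'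
        unfold S8.GG' S8.GG S8.mI
        unfold S8.mI at hF0ne
        norm_num at hF0ne ⊢
        field_simp
        ring
    exact ⟨comp1, comp2, na, nb, nd, ne_, nta0, ntaC, ntb, ntd, nte⟩
  -- measurability of GG t and GG' 0
  have hmeasG : ∀ t : ℝ, AEStronglyMeasurable (fun z => GG μX μY f ftil t z) ν := by
    intro t
    refine Measurable.aestronglyMeasurable ?_
    unfold S8.GG S8.mI
    exact ((mI2fxy.const_mul _).add (mI2txy.const_mul _)).sub
      ((((mI2fy.const_mul _).add (mI2ty.const_mul _)).mul
        ((mI2fx.const_mul _).add (mI2tx.const_mul _))).div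
        ((mI2f.const_mul _).add (mI2tf.const_mul _)))
  have hmeasG' : AEStronglyMeasurable (fun z => GG' μX μY f ftil 0 z) ν := by
    refine Measurable.aestronglyMeasurable ?_
    unfold S8.GG' S8.mI
    apply Measurable.sub (mI2txy.sub mI2fxy)
    apply Measurable.div
    · apply Measurable.sub
      · apply Measurable.mul
        · apply Measurable.add
          · exact (mI2ty.sub mI2fy).mul ((mI2fx.const_mul _).add (mI2tx.const_mul _))
          · exact ((mI2fy.const_mul _).add (mI2ty.const_mul _)).mul (mI2tx.sub mI2fx)
        · exact (mI2f.const_mul _).add (mI2tf.const_mul _)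
      · exact (((mI2fy.const_mul _).add (mI2ty.const_mul _)).mul
          ((mI2fx.const_mul _).add (mI2tx.const_mul _))).mul (mI2tf.sub mI2f)
    · exact ((mI2f.const_mul _).add (mI2tf.const_mul _)).pow_const 2
  -- integrability of GG 0
  have hGint0 : Integrable (fun z => GG μX μY f ftil 0 z) ν := by
    refine (iI2f.const_mul (2 * M ^ 2)).mono' (hmeasG 0) ?_
    filter_upwards [aegood] with z hz
    obtain ⟨ha0, hb, hd, he_, hta0, htaC, htb, htd, hte⟩ := hz.2.2
    have hGeq : GG μX μY f ftil 0 z =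
        I2 μX μY (wP f) z - I2 μX μY (wY f) z * I2 μX μY (wX f) z / I2 μX μY f z := by
      unfold S8.GG S8.mI; norm_num
    rw [Real.norm_eq_abs, hGeq]
    exact S8.aux_G0 hM0 ha0 hb hd he_
  -- the uniform derivative bound
  have hbound : ∀ᵐ z ∂ν, ∀ t ∈ Metric.ball (0:ℝ) δ,
      ‖GG' μX μY f ftil t z‖ ≤ 49 * (C' + 1) * M ^ 2 * I2 μX μY f z := by
    filter_upwards [aegood] with z hz t htball
    have ht : |t| < δ := by simpa [Real.dist_eq] using htball
    rw [hδdef] at ht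
    obtain ⟨ha0, hb, hd, he_, hta0, htaC, htb, htd, hte⟩ := hz.2.2
    have := S8.aux_bound hM0 hCnn ha0 hb hd he_ hta0 htaC htb htd hte ht
    rw [Real.norm_eq_abs]
    exact this
  -- differentiability in t for a.e. z
  have hdiff : ∀ᵐ z ∂ν, ∀ t ∈ Metric.ball (0:ℝ) δ,
      HasDerivAt (fun s => GG μX μY f ftil s z) (GG' μX μY f ftil t z) t := by
    filter_upwards [aegood] with z hz t htball
    have ht : |t| < δ := by simpa [Real.dist_eq] using htball
    obtain ⟨ha0, hb, hd, he_, hta0, htaC, htb, htd, hte⟩ := hz.2.2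
    have affine : ∀ c1 c2 : ℝ, HasDerivAt (fun s : ℝ => (1 - s) * c1 + s * c2) (c2 - c1) t := by
      intro c1 c2
      have h := (((hasDerivAt_id t).const_sub 1).mul_const c1).add ((hasDerivAt_id t).mul_const c2)
      exact h.congr_deriv (by ring)
    rcases ha0.eq_or_lt with h0 | hapos
    · have hb0 : I2 μX μY (wY f) z = 0 :=
        abs_nonpos_iff.mp (by rw [← h0] at hb; simpa using hb)
      have hd0 : I2 μX μY (wX f) z = 0 :=
        abs_nonpos_iff.mp (by rw [← h0] at hd; simpa using hd)
      have he0 : I2 μX μY (wP f) z = 0 :=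
        abs_nonpos_iff.mp (by rw [← h0] at he_; simpa using he_)
      have hta' : I2 μX μY ftil z = 0 :=
        le_antisymm (by rw [← h0] at htaC; simpa using htaC) hta0
      have htb0 : I2 μX μY (wY ftil) z = 0 :=
        abs_nonpos_iff.mp (by rw [← h0] at htb; simpa using htb)
      have htd0 : I2 μX μY (wX ftil) z = 0 :=
        abs_nonpos_iff.mp (by rw [← h0] at htd; simpa using htd)
      have hte0 : I2 μX μY (wP ftil) z = 0 :=
        abs_nonpos_iff.mp (by rw [← h0] at hte; simpa using hte)
      have hfun : (fun s => GG μX μY f ftil s z) = fun _ => (0:ℝ) := by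
        funext s
        unfold S8.GG S8.mI
        rw [hb0, hd0, he0, hta', htb0, htd0, hte0, ← h0]
        simp
      have hval : GG' μX μY f ftil t z = 0 := by
        unfold S8.GG' S8.mI
        rw [hb0, hd0, he0, hta', htb0, htd0, hte0, ← h0]
        simp
      rw [hfun, hval]
      exact hasDerivAt_const t 0
    · have hFpos : 0 < (1 - t) * I2 μX μY f z + t * I2 μX μY ftil z := by
        have h2 := S8.aux_pos hCnn hapos hta0 htaC (by rw [hδdef] at ht; exact ht)
        linarith [half_pos hapos]
      have hq := (((affine (I2 μX μY (wY f) z) (I2 μX μY (wY ftil) z)).mul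
        (affine (I2 μX μY (wX f) z) (I2 μX μY (wX ftil) z))).div
        (affine (I2 μX μY f z) (I2 μX μY ftil z)) hFpos.ne')
      exact (affine (I2 μX μY (wP f) z) (I2 μX μY (wP ftil) z)).sub hq
  -- dominated differentiation under the integral
  obtain ⟨hG'int, hD⟩ :=
    hasDerivAt_integral_of_dominated_loc_of_deriv_le (Metric.ball_mem_nhds 0 hδpos)
      (Eventually.of_forall fun t => hmeasG t) hGint0 hmeasG' hbound
      (iI2f.const_mul (49 * (C' + 1) * M ^ 2)) hdiff
  -- Ψ agrees with the integral of GG near 0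
  have hΨeq : ∀ s : ℝ, |s| < δ → Ψ s = ∫ z, GG μX μY f ftil s z ∂ν := fun s hs =>
    integral_congr_ae (aegood.mono fun z hz => hz.1 s hs)
  have hΨD : HasDerivAt Ψ (∫ z, GG' μX μY f ftil 0 z ∂ν) 0 := by
    refine hD.congr_of_eventuallyEq ?_
    filter_upwards [Metric.ball_mem_nhds (0:ℝ) hδpos] with s hs
    exact hΨeq s (by simpa [Real.dist_eq] using hs)
  have hΨ0 : Ψ 0 = ∫ z, GG μX μY f ftil 0 z ∂ν := hΨeq 0 (by simpa using hδpos)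
  have hfinal : (∫ z, ∫ x, ∫ y, ((y - m 0 z) * (x - piZ 0 z) - Ψ 0) * ftil y x z ∂μY ∂μX ∂ν) =
      ∫ z, GG' μX μY f ftil 0 z ∂ν := by
    have e1 : (∫ z, ∫ x, ∫ y, ((y - m 0 z) * (x - piZ 0 z) - Ψ 0) * ftil y x z ∂μY ∂μX ∂ν) =
        ∫ z, (GG' μX μY f ftil 0 z + GG μX μY f ftil 0 z - Ψ 0 * I2 μX μY ftil z) ∂ν :=
      integral_congr_ae (aegood.mono fun z hz => hz.2.1)
    have e2 : (∫ z, (GG' μX μY f ftil 0 z + GG μX μY f ftil 0 z - Ψ 0 * I2 μX μY ftil z) ∂ν) =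
        (∫ z, (GG' μX μY f ftil 0 z + GG μX μY f ftil 0 z) ∂ν) -
          ∫ z, Ψ 0 * I2 μX μY ftil z ∂ν :=
      integral_sub (hG'int.add hGint0) (iI2tf.const_mul (Ψ 0))
    have e3 : (∫ z, (GG' μX μY f ftil 0 z + GG μX μY f ftil 0 z) ∂ν) =
        (∫ z, GG' μX μY f ftil 0 z ∂ν) + ∫ z, GG μX μY f ftil 0 z ∂ν :=
      integral_add hG'int hGint0
    have e4 : (∫ z, Ψ 0 * I2 μX μY ftil z ∂ν) = Ψ 0 * ∫ z, I2 μX μY ftil z ∂ν :=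
      integral_const_mul _ _
    rw [e1, e2, e3, e4, hI2tf_one, ← hΨ0]
    ring
  rw [hfinal]
  exact hΨD.hasDerivWithinAt
end

section
/- Let P be a probability measure on ℝ with ∫|u| dP(u) < ∞, let y ∈ ℝ with F(y) := P((−∞, y]) > 0, and let ỹ ∈ ℝ. For t ∈ [0,1) let P_t = (1−t)·P + t·δ_{ỹ} and define γ(t) = E_{P_t}[Y·1{Y ≤ y}] / P_t((−∞, y]) (the tail conditional expectation E_{P_t}(Y | Y ≤ y)). Then γ is differentiable at t = 0 with γ'(0) = (1{ỹ ≤ y} / F(y)) · ( ỹ − γ(0) ). In particular the efficient influence function of E_P(Y | Y ≤ y) evaluated at ỹ is 1{ỹ ≤ y}/F(y) · (ỹ − E_P(Y | Y ≤ y)), which vanishes for observations with ỹ > y. -/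
/-!
Along the mixture path `P_t = (1 - t) P + t Q`, `t ∈ [0, 1]`, both the truncated mean
`∫_s f dP_t` and the mass `P_t(s)` are affine in `t`. The tail conditional expectation is
therefore a ratio of two affine functions of `t`, and the quotient rule gives its derivative
at `0`.
-/

open MeasureTheory Set

lemma hasDerivAt_affine_div_affine (a b c d : ℝ) (hc : c ≠ 0) :
    HasDerivAt (fun t : ℝ => ((1 - t) * a + t * b) / ((1 - t) * c + t * d))
      ((b * c - a * d) / c ^ 2) 0 := by
  have affine (p q : ℝ) : HasDerivAt (fun t : ℝ => (1 - t) * p + t * q) (q - p) 0 :=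
    ((((hasDerivAt_id 0).const_sub 1).mul_const p).add ((hasDerivAt_id 0).mul_const q)).congr_deriv
      (by ring)
  exact ((affine a b).div (affine c d) (by simpa using hc)).congr_deriv
    (by simp only [sub_zero, one_mul, zero_mul, add_zero]; ring)

namespace MeasureTheory.Measure

variable {α : Type*} [MeasurableSpace α] {μ ν : Measure α} {t : ℝ}

/-- Outside `[0, 1]` the weights are truncated by `ENNReal.ofReal`, so this is a genuine mixture
only for `t ∈ [0, 1]`. -/
noncomputable def mixture (μ ν : Measure α) (t : ℝ) : Measure α :=
  ENNReal.ofReal (1 - t) • μ + ENNReal.ofReal t • ν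

@[simp]
lemma mixture_zero (μ ν : Measure α) : mixture μ ν 0 = μ := by
  simp [mixture]

lemma mixture_real_apply [IsFiniteMeasure μ] [IsFiniteMeasure ν] (ht₀ : 0 ≤ t) (ht₁ : t ≤ 1)
    (s : Set α) : (mixture μ ν t).real s = (1 - t) * μ.real s + t * ν.real s := by
  rw [mixture, measureReal_add_apply (by simp [ENNReal.mul_ne_top]) (by simp [ENNReal.mul_ne_top]),
    measureReal_ennreal_smul_apply, measureReal_ennreal_smul_apply,
    ENNReal.toReal_ofReal (sub_nonneg.2 ht₁), ENNReal.toReal_ofReal ht₀]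

lemma setIntegral_mixture {f : α → ℝ} {s : Set α} (hμ : IntegrableOn f s μ)
    (hν : IntegrableOn f s ν) (ht₀ : 0 ≤ t) (ht₁ : t ≤ 1) :
    ∫ x in s, f x ∂(mixture μ ν t) = (1 - t) * ∫ x in s, f x ∂μ + t * ∫ x in s, f x ∂ν := by
  rw [mixture, restrict_add, integral_add_measure, restrict_smul, restrict_smul,
    integral_smul_measure, integral_smul_measure, ENNReal.toReal_ofReal (sub_nonneg.2 ht₁),
    ENNReal.toReal_ofReal ht₀, smul_eq_mul, smul_eq_mul]
  · rw [restrict_smul]; exact hμ.smul_measure ENNReal.ofReal_ne_top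
  · rw [restrict_smul]; exact hν.smul_measure ENNReal.ofReal_ne_top

lemma hasDerivWithinAt_setIntegral_div_measureReal_mixture [IsFiniteMeasure μ]
    [IsFiniteMeasure ν] {f : α → ℝ} {s : Set α} (hμ : IntegrableOn f s μ)
    (hν : IntegrableOn f s ν) (hs : μ.real s ≠ 0) :
    HasDerivWithinAt (fun t => (∫ x in s, f x ∂(mixture μ ν t)) / (mixture μ ν t).real s)
      (((∫ x in s, f x ∂ν) * μ.real s - (∫ x in s, f x ∂μ) * ν.real s) / μ.real s ^ 2)
      (Icc 0 1) 0 := by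
  refine (hasDerivAt_affine_div_affine _ _ _ _ hs).hasDerivWithinAt.congr (fun t ht => ?_) ?_
  · rw [setIntegral_mixture hμ hν ht.1 ht.2, mixture_real_apply ht.1 ht.2]
  · simp

end MeasureTheory.Measure

/-- For the tail conditional expectation `γ(t) = E_{P_t}(Y | Y ≤ y)` along
the mixture submodel `P_t = (1−t)·P + t·δ_ỹ`, with `F(y) = P((−∞,y]) > 0` and integrable
identity, `γ` is differentiable at `t = 0` with
`γ'(0) = (1{ỹ ≤ y}/F(y))·(ỹ − γ(0))`: the efficient influence function of
`E_P(Y | Y ≤ y)` at `ỹ`, which vanishes when `ỹ > y`. -/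
theorem stmt_11 (P : Measure ℝ) [IsProbabilityMeasure P]
    (hP : Integrable (fun u : ℝ => u) P)
    (y : ℝ) (hF : 0 < (P (Iic y)).toReal) (ytil : ℝ) :
    let Pt : ℝ → Measure ℝ := fun t =>
      ENNReal.ofReal (1 - t) • P + ENNReal.ofReal t • Measure.dirac ytil
    let γ : ℝ → ℝ := fun t => (∫ u in Iic y, u ∂(Pt t)) / ((Pt t) (Iic y)).toReal
    HasDerivWithinAt γ
      (((if ytil ≤ y then (1:ℝ) else 0) / (P (Iic y)).toReal) * (ytil - γ 0))
      (Ico 0 1) 0 := by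
  intro Pt γ
  have hγ₀ : γ 0 = (∫ u in Iic y, u ∂P) / P.real (Iic y) := by
    simp [γ, Pt, measureReal_def]
  have hδ : IntegrableOn (fun u : ℝ => u) (Iic y) (Measure.dirac ytil) :=
    (integrable_dirac enorm_lt_top).integrableOn
  refine ((Measure.hasDerivWithinAt_setIntegral_div_measureReal_mixture hP.integrableOn hδ
    hF.ne').mono Ico_subset_Icc_self).congr_deriv ?_
  rw [hγ₀, setIntegral_dirac]
  simp only [measureReal_def, Measure.dirac_apply, indicator, mem_Iic, Pi.one_apply,
    apply_ite ENNReal.toReal, ENNReal.toReal_one, ENNReal.toReal_zero]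
  split_ifs
  · field_simp
  · simp
end

section
/- Let P be a probability measure on ℝ whose cumulative distribution function F is continuous and strictly increasing, let τ ∈ (0,1), and let q = F^{-1}(τ) be the τ-quantile of P. Assume F is differentiable at q with F'(q) = f(q) > 0, and let ỹ ∈ ℝ with ỹ ≠ q. For t ∈ [0,1) let F_t(u) = (1−t)F(u) + t·1{ỹ ≤ u} be the CDF of the mixture P_t = (1−t)·P + t·δ_{ỹ}, and let q(t) = inf{u ∈ ℝ : F_t(u) ≥ τ}. Then t ↦ q(t) has a right derivative at t = 0 equal to ( 1{ỹ > q} + τ − 1 ) / f(q). In particular, the τ-quantile has efficient influence function ρ'_τ(Y − q)/f(q) where ρ'_τ(u) = 1{u ≥ 0} + τ − 1. -/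
/-!
For `t ∈ [0,1)` the mixture CDF `F_t` is strictly increasing, and near `q` the indicator
`1{ỹ ≤ u}` is constant, equal to `a = 1{ỹ ≤ q}` because `ỹ ≠ q`. Hence for small `t` the quantile
`q(t)` solves `(1 - t) F(u) + t a = τ`, i.e. `q(t) = F⁻¹((τ - t a) / (1 - t))`. The inverse function
theorem gives `(F⁻¹)'(τ) = 1 / f(q)`, and the chain rule gives `q'(0) = (τ - a) / f(q)`.
-/

open MeasureTheory Set Filter Topology

/-- The lower `τ`-quantile of a CDF `G`; a junk value when the set is empty or unbounded below. -/
noncomputable def quantile (G : ℝ → ℝ) (τ : ℝ) : ℝ := sInf {u | τ ≤ G u}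

/-- The CDF of `(1 - t) • P + t • δ_y`, where `F` is the CDF of `P`. -/
noncomputable def mixtureCDF (F : ℝ → ℝ) (y t u : ℝ) : ℝ :=
  (1 - t) * F u + t * (if y ≤ u then 1 else 0)

/-- When `1{y ≤ u} = a`, the equation `mixtureCDF F y t u = τ` reads `F u = mixtureLevel τ a t`. -/
noncomputable def mixtureLevel (τ a t : ℝ) : ℝ := (τ - t * a) / (1 - t)

theorem hasDerivAt_mixtureLevel (τ a : ℝ) : HasDerivAt (mixtureLevel τ a) (τ - a) 0 := by
  have hnum : HasDerivAt (fun t : ℝ => τ - t * a) (-a) 0 := by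
    simpa using ((hasDerivAt_id' (0 : ℝ)).mul_const a).const_sub τ
  have hden : HasDerivAt (fun t : ℝ => 1 - t) (-1) 0 := by
    simpa using (hasDerivAt_id' (0 : ℝ)).const_sub 1
  exact (hnum.fun_div hden (by norm_num)).congr_deriv (by norm_num; ring)

section

variable {F : ℝ → ℝ}

theorem StrictMono.quantile_apply (hF : StrictMono F) (x : ℝ) : quantile F (F x) = x := by
  have hset : {u | F x ≤ F u} = Ici x := by
    ext u
    simp [hF.le_iff_le]
  rw [quantile, hset, csInf_Ici]

theorem Continuous.range_mem_nhds_of_strictMono (hc : Continuous F) (hF : StrictMono F)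
    (x : ℝ) : range F ∈ 𝓝 (F x) := by
  refine mem_of_superset (Ioo_mem_nhds (hF (sub_one_lt x)) (hF (lt_add_one x))) ?_
  rw [← hc.image_Ioo_of_strictMono hF]
  exact image_subset_range _ _

theorem Continuous.eventually_apply_quantile (hc : Continuous F) (hF : StrictMono F) (x : ℝ) :
    ∀ᶠ y in 𝓝 (F x), F (quantile F y) = y := by
  filter_upwards [hc.range_mem_nhds_of_strictMono hF x] with y ⟨u, hu⟩
  rw [← hu, hF.quantile_apply]

theorem Continuous.continuousAt_quantile (hc : Continuous F) (hF : StrictMono F) (x : ℝ) :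
    ContinuousAt (quantile F) (F x) := by
  have hinv : StrictMonoOn (quantile F) (range F) := by
    rintro _ ⟨u, rfl⟩ _ ⟨v, rfl⟩ huv
    rw [hF.quantile_apply, hF.quantile_apply]
    exact hF.lt_iff_lt.1 huv
  have himage : quantile F '' range F = univ := by
    rw [← range_comp]
    exact range_eq_univ.2 fun u => ⟨u, hF.quantile_apply u⟩
  refine hinv.continuousAt_of_image_mem_nhds (hc.range_mem_nhds_of_strictMono hF x) ?_
  rw [himage]
  exact univ_mem

theorem HasDerivAt.hasDerivAt_quantile {f' x : ℝ} (hf : HasDerivAt F f' x) (hc : Continuous F)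
    (hF : StrictMono F) (hf' : f' ≠ 0) : HasDerivAt (quantile F) f'⁻¹ (F x) :=
  .of_local_left_inverse (hc.continuousAt_quantile hF x) (by rwa [hF.quantile_apply]) hf'
    (hc.eventually_apply_quantile hF x)

theorem StrictMono.mixtureCDF (hF : StrictMono F) (y : ℝ) {t : ℝ} (ht₀ : 0 ≤ t) (ht₁ : t < 1) :
    StrictMono (mixtureCDF F y t) := by
  have hind : Monotone fun u : ℝ => if y ≤ u then (1 : ℝ) else 0 := by
    intro u v huv
    dsimp only
    split_ifs with hu hv <;> norm_num
    exact hv (hu.trans huv)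
  exact (hF.const_mul (sub_pos.2 ht₁)).add_monotone (hind.const_mul ht₀)

end

theorem eventually_le_iff_of_ne {α : Type*} [LinearOrder α] [TopologicalSpace α]
    [OrderTopology α] {y q : α} (h : y ≠ q) : ∀ᶠ u in 𝓝 q, (y ≤ u ↔ y ≤ q) := by
  rcases h.lt_or_gt with h | h
  · filter_upwards [Ioi_mem_nhds h] with u hu
    simp [h.le, hu.le]
  · filter_upwards [Iio_mem_nhds h] with u hu
    simp [not_le.2 h, not_le.2 hu]

theorem quantile_mixtureCDF_eventuallyEq {F : ℝ → ℝ} (hc : Continuous F) (hF : StrictMono F)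
    {y q : ℝ} (hy : y ≠ q) :
    (fun t => quantile (mixtureCDF F y t) (F q)) =ᶠ[𝓝[≥] 0]
      fun t => quantile F (mixtureLevel (F q) (if y ≤ q then 1 else 0) t) := by
  set c := mixtureLevel (F q) (if y ≤ q then 1 else 0)
  have hc₀ : c 0 = F q := by simp [c, mixtureLevel]
  have hc_cont : Tendsto c (𝓝 0) (𝓝 (F q)) :=
    hc₀ ▸ (hasDerivAt_mixtureLevel _ _).continuousAt.tendsto
  have hquantile_tendsto : Tendsto (fun t => quantile F (c t)) (𝓝 0) (𝓝 q) := by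
    have h := (hc.continuousAt_quantile hF q).tendsto.comp hc_cont
    rwa [hF.quantile_apply] at h
  have hFx : ∀ᶠ t in 𝓝 0, F (quantile F (c t)) = c t :=
    hc_cont.eventually (hc.eventually_apply_quantile hF q)
  have hside : ∀ᶠ t in 𝓝 0, (y ≤ quantile F (c t) ↔ y ≤ q) :=
    hquantile_tendsto.eventually (eventually_le_iff_of_ne hy)
  filter_upwards [self_mem_nhdsWithin, nhdsWithin_le_nhds (eventually_lt_nhds one_pos),
    nhdsWithin_le_nhds hFx, nhdsWithin_le_nhds hside] with t (ht₀ : 0 ≤ t) ht₁ hFt hsidet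
  have hsolve : mixtureCDF F y t (quantile F (c t)) = F q := by
    have h1t : 1 - t ≠ 0 := (sub_pos.2 ht₁).ne'
    simp only [mixtureCDF, hFt, hsidet]
    simp only [c, mixtureLevel]
    field_simp
    ring
  have h := (hF.mixtureCDF y ht₀ ht₁).quantile_apply (quantile F (c t))
  rwa [hsolve] at h

theorem stmt_12_general
    (F : ℝ → ℝ)
    (hF_cont : Continuous F) (hF_mono : StrictMono F)
    (τ : ℝ)
    (q : ℝ) (hq : F q = τ)
    (fq : ℝ) (hfq : HasDerivAt F fq q) (hfq_pos : 0 < fq)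
    (ytil : ℝ) (hy : ytil ≠ q) :
    HasDerivWithinAt
      (fun t : ℝ => sInf {u : ℝ | τ ≤ (1 - t) * F u + t * (if ytil ≤ u then 1 else 0)})
      (((if q < ytil then (1:ℝ) else 0) + τ - 1) / fq)
      (Ici 0) 0 := by
  subst hq
  set a : ℝ := if ytil ≤ q then 1 else 0 with ha
  have hquantile := hfq.hasDerivAt_quantile hF_cont hF_mono hfq_pos.ne'
  have hcomp := hquantile.comp_of_eq 0 (hasDerivAt_mixtureLevel (F q) a) (by simp [mixtureLevel])
  have hvalue : ((if q < ytil then (1 : ℝ) else 0) + F q - 1) / fq = fq⁻¹ * (F q - a) := by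
    rcases hy.lt_or_gt with h | h
    · simp [ha, not_lt.2 h.le, div_eq_inv_mul]
    · simp [ha, h, not_le.2 h, div_eq_inv_mul]
  rw [hvalue]
  exact hcomp.hasDerivWithinAt.congr_of_eventuallyEq_of_mem
    (quantile_mixtureCDF_eventuallyEq hF_cont hF_mono hy) self_mem_Ici

/-- Influence function of the τ-quantile. Let `F` be the (continuous,
strictly increasing) CDF of `P`, `q` the τ-quantile (`F q = τ`), `F` differentiable at
`q` with density value `f(q) > 0`, and `ỹ ≠ q`. For the mixture CDF
`F_t(u) = (1−t)F(u) + t·1{ỹ ≤ u}`, the quantile `q(t) = inf{u : F_t(u) ≥ τ}` has right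
derivative at `t = 0` equal to `(1{ỹ > q} + τ − 1)/f(q) = ρ'_τ(ỹ − q)/f(q)`. -/
theorem stmt_12 (P : Measure ℝ) [IsProbabilityMeasure P]
    (F : ℝ → ℝ) (hF_def : F = fun u => (P (Iic u)).toReal)
    (hF_cont : Continuous F) (hF_mono : StrictMono F)
    (τ : ℝ) (hτ : τ ∈ Ioo (0:ℝ) 1)
    (q : ℝ) (hq : F q = τ)
    (fq : ℝ) (hfq : HasDerivAt F fq q) (hfq_pos : 0 < fq)
    (ytil : ℝ) (hy : ytil ≠ q) :
    HasDerivWithinAt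
      (fun t : ℝ => sInf {u : ℝ | τ ≤ (1 - t) * F u + t * (if ytil ≤ u then 1 else 0)})
      (((if q < ytil then (1:ℝ) else 0) + τ - 1) / fq)
      (Ici 0) 0 :=
  stmt_12_general F hF_cont hF_mono τ q hq fq hfq hfq_pos ytil hy
end
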